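/- arXiv:2007.13888 — 4 statements merged into one kernel-verified Lean document; each statement's English description precedes it below -/
import Mathlib

section
/- (Uniform fourth-moment bounds for the scores and the forecast errors.) Let Assumption 1 and part (i) of Assumption 2 hold. Then for all horizons h ∈ ℕ, all coefficient matrices A ∈ 𝒜(0,C,ε), all i ∈ {1,…,n} and all w ∈ ℝ^n∖{0}: (a) E[ ( v_i(A,h,w)^{−1} ξ_{i,t}(A,h) (w'u_t) )^4 ] ≤ 6 E‖u_t‖^8 / ( δ² λ_min(Σ)² ), and (b) E[ ( v_i(A,h,w)^{−1} ξ_{i,t}(A,h) )^4 ] ≤ 6 E‖u_t‖^4 / ( δ² λ_min(Σ)² ‖w‖^4 ). -/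
open MeasureTheory Filter Finset Matrix Topology

noncomputable section

namespace LP

variable {Ω : Type} [MeasurableSpace Ω]

/-- The σ-algebra generated by the random variables `u s`, `s ∈ S`. -/
def sigmaGen {E : Type*} [MeasurableSpace E] (u : ℤ → Ω → E) (S : Set ℤ) :
    MeasurableSpace Ω :=
  ⨆ s ∈ S, MeasurableSpace.comap (u s) inferInstance

/-- Strict stationarity of a process indexed by `ℤ`. -/
def StrictlyStationary {E : Type*} [MeasurableSpace E] (μ : Measure Ω) (u : ℤ → Ω → E) :
    Prop :=
  ∀ (m : ℕ) (t : ℤ),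
    Measure.map (fun ω (j : Fin m) => u (t + (j : ℕ)) ω) μ
      = Measure.map (fun ω (j : Fin m) => u ((j : ℕ) : ℤ) ω) μ

/-- Joint cumulant of order 2 (covariance). -/
def cum2 (μ : Measure Ω) (f g : Ω → ℝ) : ℝ :=
  (∫ ω, f ω * g ω ∂μ) - (∫ ω, f ω ∂μ) * (∫ ω, g ω ∂μ)

/-- Joint cumulant of order 3. -/
def cum3 (μ : Measure Ω) (f g h : Ω → ℝ) : ℝ :=
  (∫ ω, f ω * g ω * h ω ∂μ)
    - (∫ ω, f ω * g ω ∂μ) * (∫ ω, h ω ∂μ)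
    - (∫ ω, f ω * h ω ∂μ) * (∫ ω, g ω ∂μ)
    - (∫ ω, g ω * h ω ∂μ) * (∫ ω, f ω ∂μ)
    + 2 * (∫ ω, f ω ∂μ) * (∫ ω, g ω ∂μ) * (∫ ω, h ω ∂μ)

/-- Joint cumulant of order 4. -/
def cum4 (μ : Measure Ω) (f g h k : Ω → ℝ) : ℝ :=
  (∫ ω, f ω * g ω * h ω * k ω ∂μ)
    - (∫ ω, f ω * g ω ∂μ) * (∫ ω, h ω * k ω ∂μ)
    - (∫ ω, f ω * h ω ∂μ) * (∫ ω, g ω * k ω ∂μ)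
    - (∫ ω, f ω * k ω ∂μ) * (∫ ω, g ω * h ω ∂μ)
    - (∫ ω, f ω * g ω * h ω ∂μ) * (∫ ω, k ω ∂μ)
    - (∫ ω, f ω * g ω * k ω ∂μ) * (∫ ω, h ω ∂μ)
    - (∫ ω, f ω * h ω * k ω ∂μ) * (∫ ω, g ω ∂μ)
    - (∫ ω, g ω * h ω * k ω ∂μ) * (∫ ω, f ω ∂μ)
    + 2 * ((∫ ω, f ω * g ω ∂μ) * (∫ ω, h ω ∂μ) * (∫ ω, k ω ∂μ)
      + (∫ ω, f ω * h ω ∂μ) * (∫ ω, g ω ∂μ) * (∫ ω, k ω ∂μ)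
      + (∫ ω, f ω * k ω ∂μ) * (∫ ω, g ω ∂μ) * (∫ ω, h ω ∂μ)
      + (∫ ω, g ω * h ω ∂μ) * (∫ ω, f ω ∂μ) * (∫ ω, k ω ∂μ)
      + (∫ ω, g ω * k ω ∂μ) * (∫ ω, f ω ∂μ) * (∫ ω, h ω ∂μ)
      + (∫ ω, h ω * k ω ∂μ) * (∫ ω, f ω ∂μ) * (∫ ω, g ω ∂μ))
    - 6 * (∫ ω, f ω ∂μ) * (∫ ω, g ω ∂μ) * (∫ ω, h ω ∂μ) * (∫ ω, k ω ∂μ)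

/-- Smallest eigenvalue of a symmetric matrix, via the Rayleigh quotient. -/
def lammin {ι : Type*} [Fintype ι] (M : Matrix ι ι ℝ) : ℝ :=
  sInf {r : ℝ | ∃ x : ι → ℝ, (∑ i, (x i) ^ 2) = 1 ∧ r = x ⬝ᵥ M.mulVec x}

/-- Frobenius norm of a matrix. -/
def frobNorm {ι κ : Type*} [Fintype ι] [Fintype κ] (M : Matrix ι κ ℝ) : ℝ :=
  Real.sqrt (∑ i, ∑ j, (M i j) ^ 2)

/-- Euclidean norm of a vector. -/
def euclNorm {ι : Type*} [Fintype ι] (v : ι → ℝ) : ℝ :=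
  Real.sqrt (∑ i, (v i) ^ 2)

variable {n p : ℕ}

/-- The process `u_t ⊗ u_t`. -/
def zsq (u : ℤ → Ω → (Fin n → ℝ)) (t : ℤ) (ω : Ω) : Fin n × Fin n → ℝ :=
  fun q => u t ω q.1 * u t ω q.2

/-- Absolutely summable joint cumulants up to order 4 of the process `u_t ⊗ u_t`. -/
def AbsSummableCumulants4 (μ : Measure Ω) (u : ℤ → Ω → (Fin n → ℝ)) : Prop :=
  (∀ a b : Fin n × Fin n,
    Summable fun t : ℤ => |cum2 μ (fun ω => zsq u 0 ω a) (fun ω => zsq u t ω b)|) ∧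
  (∀ a b c : Fin n × Fin n,
    Summable fun t : ℤ × ℤ =>
      |cum3 μ (fun ω => zsq u 0 ω a) (fun ω => zsq u t.1 ω b) (fun ω => zsq u t.2 ω c)|) ∧
  (∀ a b c d : Fin n × Fin n,
    Summable fun t : ℤ × ℤ × ℤ =>
      |cum4 μ (fun ω => zsq u 0 ω a) (fun ω => zsq u t.1 ω b)
        (fun ω => zsq u t.2.1 ω c) (fun ω => zsq u t.2.2 ω d)|)

/-- Assumption 1: conditional mean independence of the innovations with respect to
past and future innovations. -/
def Assumption1 (μ : Measure Ω) (u : ℤ → Ω → (Fin n → ℝ)) : Prop :=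
  ∀ t : ℤ, μ[u t | sigmaGen u {s : ℤ | s ≠ t}] =ᵐ[μ] 0

/-- Conditional second moment matrix `E[u_t u_t' ∣ {u_s}_{s<t}]` (entrywise). -/
def condSecondMoment (μ : Measure Ω) (u : ℤ → Ω → (Fin n → ℝ)) (t : ℤ) (ω : Ω) :
    Matrix (Fin n) (Fin n) ℝ :=
  Matrix.of fun a b => (μ[fun ω' => u t ω' a * u t ω' b | sigmaGen u {s : ℤ | s < t}]) ω

/-- Assumption 2 (with explicit constant `δ`). -/
def Assumption2 (μ : Measure Ω) (u : ℤ → Ω → (Fin n → ℝ)) (δ : ℝ) : Prop :=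
  0 < δ ∧
  (∀ t : ℤ, Integrable (fun ω => (∑ a, (u t ω a) ^ 2) ^ 4) μ) ∧
  (∀ t : ℤ, ∀ᵐ ω ∂μ, δ ≤ lammin (condSecondMoment μ u t ω)) ∧
  AbsSummableCumulants4 μ u

/-- The data `y` is generated by the VAR(p) model with coefficients `A`,
innovations `u`, and zero initial conditions. -/
def IsVARProcess (u : ℤ → Ω → (Fin n → ℝ)) (A : Fin p → Matrix (Fin n) (Fin n) ℝ)
    (y : ℤ → Ω → (Fin n → ℝ)) : Prop :=
  (∀ t : ℤ, t ≤ 0 → y t = 0) ∧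
  (∀ t : ℤ, 1 ≤ t → ∀ ω,
    y t ω = (∑ ℓ : Fin p, (A ℓ).mulVec (y (t - ((ℓ : ℕ) + 1)) ω)) + u t ω)

/-- Companion matrix of a collection of `m` square matrices of size `n`. -/
def companion {m : ℕ} (M : Fin m → Matrix (Fin n) (Fin n) ℝ) :
    Matrix (Fin m × Fin n) (Fin m × Fin n) ℝ :=
  Matrix.of fun q r =>
    if (q.1 : ℕ) = 0 then M r.1 q.2 r.2
    else if (q.1 : ℕ) = (r.1 : ℕ) + 1 then (if q.2 = r.2 then 1 else 0) else 0

/-- Horizon-`h` impulse responses of variable `i`: `β_i(A,h)' = e_i' J 𝐀^h J'`. -/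
def irf (hp : 0 < p) (A : Fin p → Matrix (Fin n) (Fin n) ℝ) (h : ℕ) (i : Fin n) :
    Fin n → ℝ :=
  fun b => ((companion A) ^ h) (⟨0, hp⟩, i) (⟨0, hp⟩, b)

/-- Multi-step forecast error `ξ_{i,t}(A,h) = Σ_{ℓ=1}^h β_i(A,h−ℓ)' u_{t+ℓ}`. -/
def xi (hp : 0 < p) (A : Fin p → Matrix (Fin n) (Fin n) ℝ) (h : ℕ) (i : Fin n)
    (u : ℤ → Ω → (Fin n → ℝ)) (t : ℤ) (ω : Ω) : ℝ :=
  ∑ ℓ ∈ Finset.range h, irf hp A (h - 1 - ℓ) i ⬝ᵥ u (t + (ℓ : ℤ) + 1) ω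

/-- `v_i(A,h,w) = (E[ξ_{i,t}(A,h)² (w'u_t)²])^{1/2}`. -/
def vfun (μ : Measure Ω) (hp : 0 < p) (A : Fin p → Matrix (Fin n) (Fin n) ℝ) (h : ℕ)
    (i : Fin n) (u : ℤ → Ω → (Fin n → ℝ)) (w : Fin n → ℝ) : ℝ :=
  Real.sqrt (∫ ω, (xi hp A h i u 0 ω) ^ 2 * (w ⬝ᵥ u 0 ω) ^ 2 ∂μ)

/-- `g(ρ,h)² = min{1/(1−|ρ|), h}` (equal to `h` when `|ρ| = 1`). -/
def gsq (ρ : ℝ) (h : ℕ) : ℝ := if |ρ| < 1 then min (1 / (1 - |ρ|)) (h : ℝ) else (h : ℝ)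

def gfun (ρ : ℝ) (h : ℕ) : ℝ := Real.sqrt (gsq ρ h)

/-- `ρ* = max{|ρ|, 1 − ε/2}`. -/
def rhoStar (r ε : ℝ) : ℝ := max |r| (1 - ε / 2)

/-- The diagonal scaling matrix `G(A,h,ε)` (expressed via a root vector `ρ`). -/
def Gmat (p : ℕ) {n : ℕ} (ρ : Fin n → ℝ) (h : ℕ) (ε : ℝ) :
    Matrix (Fin p × Fin n) (Fin p × Fin n) ℝ :=
  Matrix.diagonal fun q => gfun (rhoStar (ρ q.2) ε) h

/-- Factorization `A(L) = B(L)(I − diag(ρ)L)` with geometrically decaying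
companion powers for `B`; `Cc` are the coefficients of `B(L) = Σ_ℓ Cc_ℓ L^ℓ`. -/
def IsFactorization (a Cb ε : ℝ) (A : Fin p → Matrix (Fin n) (Fin n) ℝ)
    (ρ : Fin n → ℝ) (Cc : ℕ → Matrix (Fin n) (Fin n) ℝ) : Prop :=
  (∀ i, a - 1 ≤ ρ i ∧ ρ i ≤ 1 - a) ∧
  Cc 0 = 1 ∧
  (∀ ℓ : ℕ, p ≤ ℓ → Cc ℓ = 0) ∧
  (∀ k : Fin p, A k = Cc (k : ℕ) * Matrix.diagonal ρ - Cc ((k : ℕ) + 1)) ∧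
  (∀ ℓ : ℕ, 1 ≤ ℓ →
    frobNorm ((companion (fun j : Fin (p - 1) => -Cc ((j : ℕ) + 1))) ^ ℓ) ≤ Cb * (1 - ε) ^ ℓ)

/-- The parameter space `𝒜(a,C,ε)`. -/
def paramSpace (n p : ℕ) (a Cb ε : ℝ) : Set (Fin p → Matrix (Fin n) (Fin n) ℝ) :=
  {A | ∃ ρ Cc, IsFactorization a Cb ε A ρ Cc}

/-- `X_t = (y_{t−1}', …, y_{t−p}')'`. -/
def Xt (p : ℕ) (y : ℤ → Ω → (Fin n → ℝ)) (t : ℤ) (ω : Ω) : Fin p × Fin n → ℝ :=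
  fun q => y (t - ((q.1 : ℕ) + 1 : ℤ)) ω q.2

/-- Sum over the estimation sample `t = 1, …, T − h`. -/
def sumT {α : Type*} [AddCommMonoid α] (T h : ℕ) (f : ℤ → α) : α :=
  ∑ s ∈ Finset.range (T - h), f ((s : ℤ) + 1)

/-- The regressor vector `x_t = (y_t', X_t')'`. -/
def xvec (p : ℕ) (y : ℤ → Ω → (Fin n → ℝ)) (t : ℤ) (ω : Ω) :
    (Fin n ⊕ (Fin p × Fin n)) → ℝ :=
  Sum.elim (y t ω) (Xt p y t ω)

def xxMatrix (p : ℕ) (y : ℤ → Ω → (Fin n → ℝ)) (T h : ℕ) (ω : Ω) :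
    Matrix (Fin n ⊕ (Fin p × Fin n)) (Fin n ⊕ (Fin p × Fin n)) ℝ :=
  Matrix.of fun i j => sumT T h fun t => xvec p y t ω i * xvec p y t ω j

/-- Lag-augmented LP regression coefficients `(β̂_1(h)', γ̂_1(h)')'`. -/
def lpCoef (p : ℕ) (hn : 0 < n) (y : ℤ → Ω → (Fin n → ℝ)) (T h : ℕ) (ω : Ω) :
    (Fin n ⊕ (Fin p × Fin n)) → ℝ :=
  (xxMatrix p y T h ω)⁻¹.mulVec fun i =>
    sumT T h fun t => xvec p y t ω i * y (t + (h : ℤ)) ω ⟨0, hn⟩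

/-- The lag-augmented LP impulse response estimator `β̂_1(h)`. -/
def betaHat (p : ℕ) (hn : 0 < n) (y : ℤ → Ω → (Fin n → ℝ)) (T h : ℕ) (ω : Ω) :
    Fin n → ℝ :=
  fun a => lpCoef p hn y T h ω (Sum.inl a)

/-- The nuisance coefficient estimator `γ̂_1(h)`. -/
def gammaHat (p : ℕ) (hn : 0 < n) (y : ℤ → Ω → (Fin n → ℝ)) (T h : ℕ) (ω : Ω) :
    Fin p × Fin n → ℝ :=
  fun q => lpCoef p hn y T h ω (Sum.inr q)

def XXhmat (p : ℕ) (y : ℤ → Ω → (Fin n → ℝ)) (T h : ℕ) (ω : Ω) :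
    Matrix (Fin p × Fin n) (Fin p × Fin n) ℝ :=
  Matrix.of fun q r => sumT T h fun t => Xt p y t ω q * Xt p y t ω r

/-- The VAR OLS estimator `Â(h)`. -/
def Ahat (p : ℕ) (y : ℤ → Ω → (Fin n → ℝ)) (T h : ℕ) (ω : Ω) :
    Matrix (Fin n) (Fin p × Fin n) ℝ :=
  (Matrix.of fun a q => sumT T h fun t => y t ω a * Xt p y t ω q) * (XXhmat p y T h ω)⁻¹

/-- VAR residuals `û_t(h) = y_t − Â(h)X_t`. -/
def uhat (p : ℕ) (y : ℤ → Ω → (Fin n → ℝ)) (T h : ℕ) (t : ℤ) (ω : Ω) : Fin n → ℝ :=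
  fun a => y t ω a - (Ahat p y T h ω).mulVec (Xt p y t ω) a

/-- LP residuals `ξ̂_{1,t}(h)`. -/
def xihat (p : ℕ) (hn : 0 < n) (y : ℤ → Ω → (Fin n → ℝ)) (T h : ℕ) (t : ℤ) (ω : Ω) : ℝ :=
  y (t + (h : ℤ)) ω ⟨0, hn⟩ - betaHat p hn y T h ω ⬝ᵥ y t ω
    - gammaHat p hn y T h ω ⬝ᵥ Xt p y t ω

def SigmaHat (p : ℕ) (y : ℤ → Ω → (Fin n → ℝ)) (T h : ℕ) (ω : Ω) :
    Matrix (Fin n) (Fin n) ℝ :=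
  (((T - h : ℕ) : ℝ))⁻¹ •
    Matrix.of fun a b => sumT T h fun t => uhat p y T h t ω a * uhat p y T h t ω b

def scoreMat (p : ℕ) (hn : 0 < n) (y : ℤ → Ω → (Fin n → ℝ)) (T h : ℕ) (ω : Ω) :
    Matrix (Fin n) (Fin n) ℝ :=
  Matrix.of fun a b => sumT T h fun t =>
    (xihat p hn y T h t ω) ^ 2 * uhat p y T h t ω a * uhat p y T h t ω b

/-- Eicker–Huber–White standard error `ŝ_1(h,ν)`. -/
def sHat (p : ℕ) (hn : 0 < n) (ν : Fin n → ℝ) (y : ℤ → Ω → (Fin n → ℝ)) (T h : ℕ)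
    (ω : Ω) : ℝ :=
  (((T - h : ℕ) : ℝ))⁻¹ *
    Real.sqrt (ν ⬝ᵥ (SigmaHat p y T h ω)⁻¹.mulVec
      ((scoreMat p hn y T h ω).mulVec ((SigmaHat p y T h ω)⁻¹.mulVec ν)))

/-- `Σ = E[u_t u_t']`. -/
def SigmaMat (μ : Measure Ω) (u : ℤ → Ω → (Fin n → ℝ)) : Matrix (Fin n) (Fin n) ℝ :=
  Matrix.of fun a b => ∫ ω, u 0 ω a * u 0 ω b ∂μ

/-- Sample matrix `T^{−1} Σ_{t=1}^T X_t X_t'` scaled by `G⁻¹` on both sides. -/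
def scaledXX (p : ℕ) (y : ℤ → Ω → (Fin n → ℝ)) (ρ : Fin n → ℝ) (ε : ℝ) (T : ℕ) (ω : Ω) :
    Matrix (Fin p × Fin n) (Fin p × Fin n) ℝ :=
  (Gmat p ρ T ε)⁻¹ * ((T : ℝ)⁻¹ • Matrix.of fun q r =>
      sumT T 0 fun t => Xt p y t ω q * Xt p y t ω r) * (Gmat p ρ T ε)⁻¹

/-- Standard normal CDF. -/
def stdNormalCDF (x : ℝ) : ℝ :=
  ∫ t in Set.Iic x, (Real.sqrt (2 * Real.pi))⁻¹ * Real.exp (-(t ^ 2) / 2)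

/-- Standard normal quantile. -/
def normalQuantile (q : ℝ) : ℝ := sInf {x : ℝ | q ≤ stdNormalCDF x}

/-- Convergence in probability to a constant. -/
def TendstoInProb (μ : Measure Ω) (X : ℕ → Ω → ℝ) (c : ℝ) : Prop :=
  ∀ η : ℝ, 0 < η →
    Tendsto (fun T => (μ {ω | η ≤ |X T ω - c|}).toReal) atTop (𝓝 0)

end LP

/-!
Write `ξ = Σ_ℓ β_ℓ'u_{t+ℓ+1}` with `β_ℓ = β_i(A, h-1-ℓ)` and `Y` for `w'u_t` (part (a)) or `1`
(part (b)), so that `ξ Y = Σ_ℓ q_ℓ` with `q_ℓ = (β_ℓ'u_{t+ℓ+1}) Y`. By Assumption 1 each `q_ℓ` is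
orthogonal to every function of the `u_s`, `s ≠ t+ℓ+1`, and these carry all the other `q_k`:
the family is "centred given the others". For such families the cross terms of `E(Σ q_ℓ)²`
vanish, and, by induction on the number of terms, the odd cross terms of `E(Σ q_ℓ)⁴` vanish while
Cauchy–Schwarz bounds the even ones, giving `E(Σ q_ℓ)⁴ ≤ 3 (Σ_ℓ ‖q_ℓ‖₄²)²`.

Denominator: with `t = 0` and `Y = w'u_0`, `v² = Σ_ℓ E[(w'u_0)² (β_ℓ'u_{ℓ+1})²]`; conditioning on
the past, Assumption 2(i) bounds each term below by `δ ‖β_ℓ‖² E(w'u_0)² ≥ δ λ_min(Σ) ‖β_ℓ‖² ‖w‖²`,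
so `v² ≥ δ λ_min(Σ) ‖w‖² B` with `B = Σ_ℓ ‖β_ℓ‖²` (the same argument gives `λ_min(Σ) ≥ δ`).
Numerator: Cauchy–Schwarz and stationarity give `‖q_ℓ‖₄² ≤ ‖β_ℓ‖² ‖w‖² (E‖u_t‖⁸)^{1/2}` in (a) and
`‖q_ℓ‖₄² ≤ ‖β_ℓ‖² (E‖u_t‖⁴)^{1/2}` in (b), hence `E(ξY)⁴ ≤ 3 B² ‖w‖⁴ E‖u_t‖⁸`, resp.
`E ξ⁴ ≤ 3 B² E‖u_t‖⁴`. Dividing by `v⁴` the factor `B²` cancels, with constant `3 ≤ 6`.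
-/

namespace LP

section Rayleigh

variable {ι : Type*} [Fintype ι]

lemma isCompact_setOf_sum_sq_eq_one : IsCompact {x : ι → ℝ | ∑ i, x i ^ 2 = 1} := by
  refine (isCompact_closedBall (0 : ι → ℝ) 1).of_isClosed_subset
    (isClosed_eq (by fun_prop) continuous_const) fun x hx => ?_
  rw [mem_closedBall_zero_iff, pi_norm_le_iff_of_nonneg zero_le_one]
  intro i
  have hi : x i ^ 2 ≤ 1 :=
    hx.symm ▸ Finset.single_le_sum (f := fun i => x i ^ 2) (fun i _ => sq_nonneg _) (mem_univ i)
  rw [Real.norm_eq_abs, ← sq_le_one_iff_abs_le_one]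
  exact hi

lemma bddBelow_rayleigh (M : Matrix ι ι ℝ) :
    BddBelow {r : ℝ | ∃ x : ι → ℝ, ∑ i, x i ^ 2 = 1 ∧ r = x ⬝ᵥ M *ᵥ x} := by
  have hset : {r : ℝ | ∃ x : ι → ℝ, ∑ i, x i ^ 2 = 1 ∧ r = x ⬝ᵥ M *ᵥ x}
      = (fun x => x ⬝ᵥ M *ᵥ x) '' {x | ∑ i, x i ^ 2 = 1} := by
    ext r; simp [eq_comm]
  rw [hset]
  exact (isCompact_setOf_sum_sq_eq_one.image (by fun_prop)).bddBelow

lemma lammin_le (M : Matrix ι ι ℝ) {x : ι → ℝ} (hx : ∑ i, x i ^ 2 = 1) :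
    lammin M ≤ x ⬝ᵥ M *ᵥ x :=
  csInf_le (bddBelow_rayleigh M) ⟨x, hx, rfl⟩

lemma le_lammin [Nonempty ι] {M : Matrix ι ι ℝ} {c : ℝ}
    (h : ∀ x : ι → ℝ, ∑ i, x i ^ 2 = 1 → c ≤ x ⬝ᵥ M *ᵥ x) : c ≤ lammin M := by
  classical
  obtain ⟨i⟩ := ‹Nonempty ι›
  refine le_csInf ⟨_, Pi.single i 1, by simp [Pi.single_apply], rfl⟩ ?_
  rintro r ⟨x, hx, rfl⟩
  exact h x hx

lemma mul_sum_sq_le_of_le_lammin {M : Matrix ι ι ℝ} {c : ℝ} (hc : c ≤ lammin M) (x : ι → ℝ) :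
    c * ∑ i, x i ^ 2 ≤ x ⬝ᵥ M *ᵥ x := by
  set S := ∑ i, x i ^ 2
  rcases (Finset.sum_nonneg fun i _ => sq_nonneg (x i) : 0 ≤ S).eq_or_lt with hS | hS
  · have hx : x = 0 := funext fun i =>
      pow_eq_zero_iff two_ne_zero |>.mp <|
        (Finset.sum_eq_zero_iff_of_nonneg fun i _ => sq_nonneg (x i)).mp hS.symm i (mem_univ i)
    simp [hx, S]
  · set s := √S
    have hy : ∑ i, (s⁻¹ • x) i ^ 2 = 1 := by
      simp only [Pi.smul_apply, smul_eq_mul, mul_pow, ← Finset.mul_sum, inv_pow, s]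
      rw [Real.sq_sqrt hS.le]
      exact inv_mul_cancel₀ hS.ne'
    have key := hc.trans (lammin_le M hy)
    rw [mulVec_smul, dotProduct_smul, smul_dotProduct, smul_eq_mul, smul_eq_mul,
      ← mul_assoc, ← mul_inv, ← sq, Real.sq_sqrt hS.le, ← div_eq_inv_mul, le_div_iff₀ hS] at key
    linarith

end Rayleigh

section Moments

variable {Ω ι : Type*} [MeasurableSpace Ω] {μ : Measure Ω}

lemma _root_.ENNReal.inv_two_mul_add_inv_two_mul (p : ENNReal) :
    (2 * p)⁻¹ + (2 * p)⁻¹ = p⁻¹ := by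
  rw [ENNReal.mul_inv (by simp) (by simp), ← two_mul, ← mul_assoc,
    ENNReal.mul_inv_cancel two_ne_zero ENNReal.ofNat_ne_top, one_mul]

instance : ENNReal.HolderTriple 4 4 2 :=
  ⟨by convert ENNReal.inv_two_mul_add_inv_two_mul 2 using 3 <;> norm_num⟩

instance : ENNReal.HolderTriple 8 8 4 :=
  ⟨by convert ENNReal.inv_two_mul_add_inv_two_mul 4 using 3 <;> norm_num⟩

lemma integrable_mul_mul_mul_of_memLp_four {f g k l : Ω → ℝ} (hf : MemLp f 4 μ)
    (hg : MemLp g 4 μ) (hk : MemLp k 4 μ) (hl : MemLp l 4 μ) :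
    Integrable (fun ω => f ω * g ω * k ω * l ω) μ := by
  refine ((hg.mul' hf (r := 2)).integrable_mul (hl.mul' hk (r := 2))).congr
    (ae_of_all _ fun ω => ?_)
  simp only [Pi.mul_apply]
  ring

lemma _root_.MeasureTheory.MemLp.integrable_pow_four {f : Ω → ℝ} (hf : MemLp f 4 μ) :
    Integrable (fun ω => f ω ^ 4) μ :=
  (integrable_mul_mul_mul_of_memLp_four hf hf hf hf).congr (ae_of_all _ fun ω => by ring)

lemma integral_sq_mul_sq_le {f g : Ω → ℝ} (hf : MemLp f 4 μ) (hg : MemLp g 4 μ) :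
    ∫ ω, f ω ^ 2 * g ω ^ 2 ∂μ ≤ √(∫ ω, f ω ^ 4 ∂μ) * √(∫ ω, g ω ^ 4 ∂μ) := by
  have hsq : ∀ {f : Ω → ℝ}, MemLp f 4 μ → MemLp (fun ω => f ω ^ 2) (ENNReal.ofReal 2) μ :=
    fun hf => by simpa only [sq, ENNReal.ofReal_ofNat] using hf.mul' hf (r := 2)
  have := integral_mul_le_Lp_mul_Lq_of_nonneg Real.HolderConjugate.two_two
    (ae_of_all _ fun ω => sq_nonneg (f ω)) (ae_of_all _ fun ω => sq_nonneg (g ω)) (hsq hf) (hsq hg)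
  simpa only [Real.rpow_two, ← pow_mul, ← Real.sqrt_eq_rpow] using this

lemma sq_dotProduct_le [Fintype ι] (v x : ι → ℝ) :
    (v ⬝ᵥ x) ^ 2 ≤ (∑ i, v i ^ 2) * ∑ i, x i ^ 2 :=
  Finset.sum_mul_sq_le_sq_mul_sq Finset.univ v x

lemma memLp_eight_of_integrable_sum_sq_pow_four [Fintype ι] {X : Ω → ι → ℝ}
    (hX : AEStronglyMeasurable X μ) (h8 : Integrable (fun ω => (∑ i, X ω i ^ 2) ^ 4) μ) :
    MemLp X 8 μ := by
  have h8' : ((8 : ENNReal).toReal) = (8 : ℕ) := by norm_num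
  rw [← integrable_norm_rpow_iff hX (by norm_num) (by norm_num), h8']
  simp_rw [Real.rpow_natCast]
  refine h8.mono' (by fun_prop) (ae_of_all _ fun ω => ?_)
  have hnorm : ‖X ω‖ ≤ √(∑ i, X ω i ^ 2) :=
    (pi_norm_le_iff_of_nonneg (Real.sqrt_nonneg _)).mpr fun i => Real.abs_le_sqrt <|
      Finset.single_le_sum (f := fun i => X ω i ^ 2) (fun i _ => sq_nonneg _) (mem_univ i)
  rw [Real.norm_eq_abs, abs_of_nonneg (by positivity)]
  calc ‖X ω‖ ^ 8 = (‖X ω‖ ^ 2) ^ 4 := by ring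
    _ ≤ (√(∑ i, X ω i ^ 2) ^ 2) ^ 4 := by gcongr
    _ = (∑ i, X ω i ^ 2) ^ 4 := by rw [Real.sq_sqrt (by positivity)]

lemma memLp_dotProduct [Fintype ι] {X : Ω → ι → ℝ} {p : ENNReal} (hX : MemLp X p μ)
    (v : ι → ℝ) : MemLp (fun ω => v ⬝ᵥ X ω) p μ :=
  (LinearMap.toContinuousLinearMap (dotProductBilin ℝ ℝ v)).comp_memLp' hX

lemma integral_sum_mul {q : ι → Ω → ℝ} {s : Finset ι} {G : Ω → ℝ}
    (hint : ∀ i ∈ s, Integrable (fun ω => q i ω * G ω) μ) :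
    ∫ ω, (∑ i ∈ s, q i ω) * G ω ∂μ = ∑ i ∈ s, ∫ ω, q i ω * G ω ∂μ := by
  simp_rw [Finset.sum_mul]
  exact integral_finsetSum s hint

/-- The orthogonality structure that Assumption 1 gives the summands of a forecast error. -/
structure IsCenteredGivenOthers (μ : Measure Ω) (m : ι → MeasurableSpace Ω)
    (q : ι → Ω → ℝ) : Prop where
  measurable : ∀ i j, i ≠ j → Measurable[m j] (q i)
  integral_mul_eq_zero : ∀ j (F : Ω → ℝ), Measurable[m j] F →
    Integrable (fun ω => F ω * q j ω) μ → ∫ ω, F ω * q j ω ∂μ = 0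

variable {m : ι → MeasurableSpace Ω} {q : ι → Ω → ℝ}

lemma IsCenteredGivenOthers.integral_sum_sq (hc : IsCenteredGivenOthers μ m q)
    (hq : ∀ i, MemLp (q i) 2 μ) (s : Finset ι) :
    ∫ ω, (∑ i ∈ s, q i ω) ^ 2 ∂μ = ∑ i ∈ s, ∫ ω, q i ω ^ 2 ∂μ := by
  have hint : ∀ i j, Integrable (fun ω => q i ω * q j ω) μ :=
    fun i j => (hq i).integrable_mul (hq j)
  have hS : MemLp (fun ω => ∑ i ∈ s, q i ω) 2 μ := memLp_finsetSum s fun i _ => hq i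
  simp_rw [sq, integral_sum_mul fun i _ => (hq i).integrable_mul hS]
  refine Finset.sum_congr rfl fun i hi => ?_
  simp_rw [Finset.mul_sum]
  rw [integral_finsetSum _ fun j _ => hint i j]
  refine Finset.sum_eq_single_of_mem i hi fun j _ hji => ?_
  simpa only [mul_comm] using hc.integral_mul_eq_zero i _ (hc.measurable j i hji) (hint j i)

namespace IsCenteredGivenOthers

variable (hc : IsCenteredGivenOthers μ m q) (hq : ∀ i, MemLp (q i) 4 μ) {s : Finset ι} {j : ι}
include hc hq

lemma integral_sum_pow_three_mul (hj : j ∉ s) :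
    ∫ ω, (∑ i ∈ s, q i ω) ^ 3 * q j ω ∂μ = 0 := by
  have hS : MemLp (fun ω => ∑ i ∈ s, q i ω) 4 μ := memLp_finsetSum s fun i _ => hq i
  refine hc.integral_mul_eq_zero j _ ?_ ?_
  · exact (Finset.measurable_sum s fun i hi =>
      hc.measurable i j (ne_of_mem_of_not_mem hi hj)).pow_const 3
  · simpa only [pow_succ, pow_zero, one_mul] using
      integrable_mul_mul_mul_of_memLp_four hS hS hS (hq j)

lemma integral_sum_mul_pow_three (hj : j ∉ s) :
    ∫ ω, (∑ i ∈ s, q i ω) * q j ω ^ 3 ∂μ = 0 := by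
  have hint : ∀ i, Integrable (fun ω => q j ω ^ 3 * q i ω) μ := fun i => by
    simpa only [pow_succ, pow_zero, one_mul] using
      integrable_mul_mul_mul_of_memLp_four (hq j) (hq j) (hq j) (hq i)
  simp_rw [integral_sum_mul fun i _ => by simpa only [mul_comm] using hint i, mul_comm (q _ _)]
  refine Finset.sum_eq_zero fun i hi => hc.integral_mul_eq_zero i _ ?_ (hint i)
  exact (hc.measurable j i (ne_of_mem_of_not_mem hi hj).symm).pow_const 3

lemma integral_sum_sq_mul_sq_le (hj : j ∉ s) :
    ∫ ω, (∑ i ∈ s, q i ω) ^ 2 * q j ω ^ 2 ∂μ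
      ≤ (∑ i ∈ s, √(∫ ω, q i ω ^ 4 ∂μ)) * √(∫ ω, q j ω ^ 4 ∂μ) := by
  classical
  have hS : ∀ s : Finset ι, MemLp (fun ω => ∑ i ∈ s, q i ω) 4 μ :=
    fun s => memLp_finsetSum s fun i _ => hq i
  have hint : ∀ {f g : Ω → ℝ}, MemLp f 4 μ → MemLp g 4 μ →
      Integrable (fun ω => f ω * q j ω ^ 2 * g ω) μ := fun hf hg =>
    (integrable_mul_mul_mul_of_memLp_four hf (hq j) (hq j) hg).congr
      (ae_of_all _ fun ω => by ring)
  have hexpand : ∀ ω, (∑ i ∈ s, q i ω) ^ 2 * q j ω ^ 2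
      = ∑ i ∈ s, q i ω * ((∑ k ∈ s, q k ω) * q j ω ^ 2) := fun ω => by
    rw [sq, mul_assoc, Finset.sum_mul]
  rw [integral_congr_ae (ae_of_all _ hexpand), Finset.sum_mul, integral_finsetSum _
    fun i _ => (hint (hS s) (hq i)).congr (ae_of_all _ fun ω => by ring)]
  refine Finset.sum_le_sum fun i hi => ?_
  have hsplit : ∀ ω, q i ω * ((∑ k ∈ s, q k ω) * q j ω ^ 2)
      = q i ω ^ 2 * q j ω ^ 2 + (∑ k ∈ s.erase i, q k ω) * q j ω ^ 2 * q i ω := fun ω => by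
    rw [← Finset.add_sum_erase s _ hi]
    ring
  have hcross : ∫ ω, (∑ k ∈ s.erase i, q k ω) * q j ω ^ 2 * q i ω ∂μ = 0 := by
    refine hc.integral_mul_eq_zero i _ ?_ (hint (hS _) (hq i))
    refine (Finset.measurable_sum _ fun k hk => hc.measurable k i ?_).mul
      ((hc.measurable j i ?_).pow_const 2)
    · exact Finset.ne_of_mem_erase hk
    · rintro rfl
      exact hj hi
  rw [integral_congr_ae (ae_of_all _ hsplit),
    integral_add ((hint (hq i) (hq i)).congr (ae_of_all _ fun ω => by ring)) (hint (hS _) (hq i)),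
    hcross, add_zero]
  exact integral_sq_mul_sq_le (hq i) (hq j)

theorem integral_sum_pow_four_le [DecidableEq ι] (s : Finset ι) :
    ∫ ω, (∑ i ∈ s, q i ω) ^ 4 ∂μ ≤ 3 * (∑ i ∈ s, √(∫ ω, q i ω ^ 4 ∂μ)) ^ 2 := by
  induction s using Finset.induction_on with
  | empty => simp
  | insert j s hj ih =>
    set S := fun ω => ∑ i ∈ s, q i ω
    have hS : MemLp S 4 μ := memLp_finsetSum s fun i _ => hq i
    have hint : ∀ {f g k l : Ω → ℝ} {F : Ω → ℝ}, MemLp f 4 μ → MemLp g 4 μ → MemLp k 4 μ →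
        MemLp l 4 μ → (∀ ω, f ω * g ω * k ω * l ω = F ω) → Integrable F μ :=
      fun hf hg hk hl hF => (integrable_mul_mul_mul_of_memLp_four hf hg hk hl).congr
        (ae_of_all _ hF)
    have I1 : Integrable (fun ω => S ω ^ 4) μ := hint hS hS hS hS fun ω => by ring
    have I2 : Integrable (fun ω => S ω ^ 3 * q j ω) μ := hint hS hS hS (hq j) fun ω => by ring
    have I3 : Integrable (fun ω => S ω ^ 2 * q j ω ^ 2) μ :=
      hint hS hS (hq j) (hq j) fun ω => by ring
    have I4 : Integrable (fun ω => S ω * q j ω ^ 3) μ :=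
      hint hS (hq j) (hq j) (hq j) fun ω => by ring
    have I5 : Integrable (fun ω => q j ω ^ 4) μ := hint (hq j) (hq j) (hq j) (hq j) fun ω => by ring
    have hexpand : ∀ ω, (∑ i ∈ insert j s, q i ω) ^ 4 = S ω ^ 4 + 4 * (S ω ^ 3 * q j ω)
        + 6 * (S ω ^ 2 * q j ω ^ 2) + 4 * (S ω * q j ω ^ 3) + q j ω ^ 4 := fun ω => by
      rw [Finset.sum_insert hj]
      ring
    have hq4 : ∫ ω, q j ω ^ 4 ∂μ = √(∫ ω, q j ω ^ 4 ∂μ) ^ 2 :=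
      (Real.sq_sqrt (by positivity)).symm
    rw [integral_congr_ae (ae_of_all _ hexpand), integral_add, integral_add, integral_add,
      integral_add, integral_const_mul, integral_const_mul, integral_const_mul,
      hc.integral_sum_pow_three_mul hq hj, hc.integral_sum_mul_pow_three hq hj, hq4,
      Finset.sum_insert hj]
    · have hC := hc.integral_sum_sq_mul_sq_le hq hj
      have hC0 : 0 ≤ ∑ i ∈ s, √(∫ ω, q i ω ^ 4 ∂μ) := by positivity
      nlinarith [Real.sqrt_nonneg (∫ ω, q j ω ^ 4 ∂μ)]
    all_goals fun_prop

theorem integral_sum_pow_four_le_of_le [DecidableEq ι] (s : Finset ι) {c : ι → ℝ}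
    (hc0 : ∀ i ∈ s, 0 ≤ c i) (hqc : ∀ i ∈ s, ∫ ω, q i ω ^ 4 ∂μ ≤ c i ^ 2) :
    ∫ ω, (∑ i ∈ s, q i ω) ^ 4 ∂μ ≤ 3 * (∑ i ∈ s, c i) ^ 2 := by
  refine (hc.integral_sum_pow_four_le hq s).trans ?_
  gcongr with i hi
  exact (Real.sqrt_le_sqrt (hqc i hi)).trans_eq (Real.sqrt_sq (hc0 i hi))

end IsCenteredGivenOthers

end Moments

section Innovations

variable {Ω : Type} {n : ℕ} {u : ℤ → Ω → (Fin n → ℝ)}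

lemma sigmaGen_mono {S T : Set ℤ} (h : S ⊆ T) : sigmaGen u S ≤ sigmaGen u T :=
  biSup_mono h

lemma measurable_sigmaGen {S : Set ℤ} {s : ℤ} (hs : s ∈ S) : Measurable[sigmaGen u S] (u s) :=
  measurable_iff_comap_le.mpr <|
    le_iSup₂ (f := fun t (_ : t ∈ S) => MeasurableSpace.comap (u t) inferInstance) s hs

lemma measurable_dotProduct_sigmaGen {S : Set ℤ} {s : ℤ} (hs : s ∈ S) (v : Fin n → ℝ) :
    Measurable[sigmaGen u S] (fun ω => v ⬝ᵥ u s ω) :=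
  (continuous_const.dotProduct continuous_id).measurable.comp (measurable_sigmaGen hs)

variable [MeasurableSpace Ω] {μ : Measure Ω}

lemma sigmaGen_le (hu : ∀ t, Measurable (u t)) (S : Set ℤ) :
    sigmaGen u S ≤ ‹MeasurableSpace Ω› :=
  iSup₂_le fun s _ => (hu s).comap_le

lemma StrictlyStationary.map_eq_map_zero (hu : ∀ t, Measurable (u t)) (hst : StrictlyStationary μ u)
    (s : ℤ) : μ.map (u s) = μ.map (u 0) := by
  have hproj : ∀ r : Fin 1 → ℤ, (μ.map fun ω (j : Fin 1) => u (r j) ω).map (fun z => z 0)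
      = μ.map (u (r 0)) := fun r => by
    rw [Measure.map_map (measurable_pi_apply 0) (measurable_pi_lambda _ fun j => hu _)]
    rfl
  have := congrArg (Measure.map fun z : Fin 1 → Fin n → ℝ => z 0) (hst 1 s)
  rwa [hproj (fun j => s + (j : ℕ)), hproj (fun j => (j : ℕ)), Fin.val_zero, Nat.cast_zero,
    add_zero] at this

lemma StrictlyStationary.integral_comp_eq (hu : ∀ t, Measurable (u t))
    (hst : StrictlyStationary μ u) {g : (Fin n → ℝ) → ℝ} (hg : Measurable g) (s t : ℤ) :
    ∫ ω, g (u s ω) ∂μ = ∫ ω, g (u t ω) ∂μ := by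
  rw [← integral_map (hu s).aemeasurable hg.aestronglyMeasurable,
    ← integral_map (hu t).aemeasurable hg.aestronglyMeasurable, hst.map_eq_map_zero hu s,
    hst.map_eq_map_zero hu t]

lemma condExp_dotProduct_sq {k : ℤ} (huk : MemLp (u k) 2 μ) (β : Fin n → ℝ) :
    μ[fun ω => (β ⬝ᵥ u k ω) ^ 2 | sigmaGen u {s | s < k}]
      =ᵐ[μ] fun ω => β ⬝ᵥ condSecondMoment μ u k ω *ᵥ β := by
  have hexpand : (fun ω => (β ⬝ᵥ u k ω) ^ 2)
      = ∑ p : Fin n × Fin n, (β p.1 * β p.2) • fun ω => u k ω p.1 * u k ω p.2 := by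
    ext ω
    simp only [Finset.sum_apply, Pi.smul_apply, smul_eq_mul, Fintype.sum_prod_type, sq,
      dotProduct, Finset.sum_mul_sum]
    exact Finset.sum_congr rfl fun a _ => Finset.sum_congr rfl fun b _ => by ring
  rw [hexpand]
  have hint : ∀ a b, Integrable (fun ω => u k ω a * u k ω b) μ :=
    fun a b => (huk.eval a).integrable_mul (huk.eval b)
  filter_upwards [condExp_finsetSum (s := Finset.univ)
      (fun (p : Fin n × Fin n) _ => (hint p.1 p.2).smul (β p.1 * β p.2))
      (sigmaGen u {s | s < k}),
    ae_all_iff.mpr fun p : Fin n × Fin n => condExp_smul (μ := μ) (β p.1 * β p.2)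
      (fun ω => u k ω p.1 * u k ω p.2) (sigmaGen u {s | s < k})] with ω hsum hsmul
  rw [hsum, Finset.sum_apply]
  simp only [hsmul, Pi.smul_apply, smul_eq_mul, Fintype.sum_prod_type,
    dotProduct, mulVec, condSecondMoment, of_apply, Finset.mul_sum]
  exact Finset.sum_congr rfl fun a _ => Finset.sum_congr rfl fun b _ => by ring

lemma dotProduct_SigmaMat_mulVec (hu0 : MemLp (u 0) 2 μ) (w : Fin n → ℝ) :
    w ⬝ᵥ SigmaMat μ u *ᵥ w = ∫ ω, (w ⬝ᵥ u 0 ω) ^ 2 ∂μ := by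
  have hint : ∀ a b, Integrable (fun ω => w a * w b * (u 0 ω a * u 0 ω b)) μ :=
    fun a b => ((hu0.eval a).integrable_mul (hu0.eval b)).const_mul _
  have hexpand : ∀ ω, (w ⬝ᵥ u 0 ω) ^ 2 = ∑ a, ∑ b, w a * w b * (u 0 ω a * u 0 ω b) := fun ω => by
    simp only [dotProduct, sq, Finset.sum_mul_sum]
    exact Finset.sum_congr rfl fun a _ => Finset.sum_congr rfl fun b _ => by ring
  rw [integral_congr_ae (ae_of_all _ hexpand),
    integral_finsetSum _ fun a _ => integrable_finsetSum _ fun b _ => hint a b]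
  simp only [dotProduct, mulVec, SigmaMat, of_apply, Finset.mul_sum]
  refine Finset.sum_congr rfl fun a _ => ?_
  rw [integral_finsetSum _ fun b _ => hint a b]
  refine Finset.sum_congr rfl fun b _ => ?_
  rw [integral_const_mul]
  ring

section

variable [IsFiniteMeasure μ]

lemma integral_mul_dotProduct_eq_zero (hu : ∀ t, Measurable (u t)) (hA1 : Assumption1 μ u)
    {k : ℤ} (huk : Integrable (u k) μ) (v : Fin n → ℝ) {F : Ω → ℝ}
    (hF : Measurable[sigmaGen u {s | s ≠ k}] F)
    (hFv : Integrable (fun ω => F ω * (v ⬝ᵥ u k ω)) μ) :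
    ∫ ω, F ω * (v ⬝ᵥ u k ω) ∂μ = 0 := by
  have hm := sigmaGen_le hu {s | s ≠ k}
  let T := LinearMap.toContinuousLinearMap (dotProductBilin ℝ ℝ v)
  have hcent : μ[fun ω => v ⬝ᵥ u k ω | sigmaGen u {s | s ≠ k}] =ᵐ[μ] 0 := by
    filter_upwards [T.comp_condExp_comm huk (m := sigmaGen u {s | s ≠ k}), hA1 k] with ω hT h0
    rw [← show T ∘ u k = fun ω => v ⬝ᵥ u k ω from rfl, ← hT, Function.comp_apply, h0]
    simp
  calc ∫ ω, F ω * (v ⬝ᵥ u k ω) ∂μ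
      = ∫ ω, μ[F * fun ω => v ⬝ᵥ u k ω | sigmaGen u {s | s ≠ k}] ω ∂μ :=
        (integral_condExp hm).symm
    _ = ∫ ω, F ω * μ[fun ω => v ⬝ᵥ u k ω | sigmaGen u {s | s ≠ k}] ω ∂μ :=
        integral_congr_ae <| condExp_mul_of_stronglyMeasurable_left hF.stronglyMeasurable hFv
          (T.integrable_comp huk)
    _ = 0 := by
        rw [integral_congr_ae (hcent.mono fun ω h => by rw [h, Pi.zero_apply, mul_zero])]
        simp

lemma mul_sum_sq_mul_integral_le (hu : ∀ t, Measurable (u t)) {k : ℤ} (huk : MemLp (u k) 2 μ)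
    {δ : ℝ} (hδk : ∀ᵐ ω ∂μ, δ ≤ lammin (condSecondMoment μ u k ω)) (β : Fin n → ℝ)
    {F : Ω → ℝ} (hF : Measurable[sigmaGen u {s | s < k}] F) (hF0 : 0 ≤ F) (hFint : Integrable F μ)
    (hFβ : Integrable (fun ω => F ω * (β ⬝ᵥ u k ω) ^ 2) μ) :
    δ * (∑ a, β a ^ 2) * ∫ ω, F ω ∂μ ≤ ∫ ω, F ω * (β ⬝ᵥ u k ω) ^ 2 ∂μ := by
  have hm := sigmaGen_le hu {s | s < k}
  have hβ := memLp_dotProduct huk β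
  have hpull : μ[F * fun ω => (β ⬝ᵥ u k ω) ^ 2 | sigmaGen u {s | s < k}]
      =ᵐ[μ] fun ω => F ω * (β ⬝ᵥ condSecondMoment μ u k ω *ᵥ β) :=
    (condExp_mul_of_stronglyMeasurable_left hF.stronglyMeasurable hFβ
      ((hβ.integrable_mul hβ).congr (ae_of_all _ fun ω => (sq _).symm))).trans
      (EventuallyEq.rfl.mul (condExp_dotProduct_sq huk β))
  calc δ * (∑ a, β a ^ 2) * ∫ ω, F ω ∂μ = ∫ ω, F ω * (δ * ∑ a, β a ^ 2) ∂μ := by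
        rw [integral_mul_const, mul_comm]
    _ ≤ ∫ ω, F ω * (β ⬝ᵥ condSecondMoment μ u k ω *ᵥ β) ∂μ := by
        refine integral_mono_ae (hFint.mul_const _) (integrable_condExp.congr hpull) ?_
        filter_upwards [hδk] with ω hω
        exact mul_le_mul_of_nonneg_left (mul_sum_sq_le_of_le_lammin hω β) (hF0 ω)
    _ = ∫ ω, F ω * (β ⬝ᵥ u k ω) ^ 2 ∂μ :=
        (integral_congr_ae hpull.symm).trans (integral_condExp hm)

end

lemma le_lammin_SigmaMat [IsProbabilityMeasure μ] [Nonempty (Fin n)]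
    (hu : ∀ t, Measurable (u t)) (hu0 : MemLp (u 0) 2 μ) {δ : ℝ}
    (hδ0 : ∀ᵐ ω ∂μ, δ ≤ lammin (condSecondMoment μ u 0 ω)) :
    δ ≤ lammin (SigmaMat μ u) := by
  refine le_lammin fun x hx => ?_
  have hx2 := memLp_dotProduct hu0 x
  have := mul_sum_sq_mul_integral_le hu hu0 hδ0 x (F := 1) measurable_const zero_le_one
    (integrable_const 1) ((hx2.integrable_mul hx2).congr (ae_of_all _ fun ω => by
      simp only [Pi.mul_apply, Pi.one_apply, one_mul, sq]))
  simpa [hx, dotProduct_SigmaMat_mulVec hu0] using this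

lemma mul_lammin_SigmaMat_mul_sum_sq_pos [IsProbabilityMeasure μ] (hu : ∀ t, Measurable (u t))
    (hmom8 : ∀ t, Integrable (fun ω => (∑ a, u t ω a ^ 2) ^ 4) μ) {δ : ℝ} (hδ : 0 < δ)
    (hδ0 : ∀ᵐ ω ∂μ, δ ≤ lammin (condSecondMoment μ u 0 ω)) {w : Fin n → ℝ} (hw : w ≠ 0) :
    0 < δ * lammin (SigmaMat μ u) * ∑ a, w a ^ 2 := by
  obtain ⟨a₀, ha₀⟩ := Function.ne_iff.mp hw
  have : Nonempty (Fin n) := ⟨a₀⟩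
  have hlam : 0 < lammin (SigmaMat μ u) := hδ.trans_le <| le_lammin_SigmaMat hu
    ((memLp_eight_of_integrable_sum_sq_pow_four (hu 0).aestronglyMeasurable (hmom8 0)).mono_exponent
      (by norm_num)) hδ0
  have hw : 0 < ∑ a, w a ^ 2 :=
    (pow_pos (abs_pos.mpr ha₀) 2).trans_le <| (sq_abs _).trans_le <|
      Finset.single_le_sum (f := fun a => w a ^ 2) (fun a _ => sq_nonneg _) (mem_univ a₀)
  positivity

end Innovations

section ForecastErrors

variable {Ω : Type} [MeasurableSpace Ω] {μ : Measure Ω} {n : ℕ} {u : ℤ → Ω → (Fin n → ℝ)}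

lemma integral_dotProduct_mul_dotProduct_pow_four_le (hu : ∀ t, Measurable (u t))
    (hst : StrictlyStationary μ u) (hmom8 : ∀ t, Integrable (fun ω => (∑ a, u t ω a ^ 2) ^ 4) μ)
    (β w : Fin n → ℝ) (k t : ℤ) :
    ∫ ω, ((β ⬝ᵥ u k ω) * (w ⬝ᵥ u t ω)) ^ 4 ∂μ
      ≤ ((∑ a, β a ^ 2) * ((∑ a, w a ^ 2) * √(∫ ω, (∑ a, u t ω a ^ 2) ^ 4 ∂μ))) ^ 2 := by
  set N : ℤ → Ω → ℝ := fun s ω => ∑ a, u s ω a ^ 2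
  have hN : ∀ s ω, 0 ≤ N s ω := fun s ω => Finset.sum_nonneg fun a _ => sq_nonneg _
  have hstat : ∫ ω, N k ω ^ 4 ∂μ = ∫ ω, N t ω ^ 4 ∂μ :=
    hst.integral_comp_eq hu (g := fun x => (∑ a, x a ^ 2) ^ 4) (by fun_prop) k t
  have hL : ∀ s, MemLp (u s) 8 μ := fun s =>
    memLp_eight_of_integrable_sum_sq_pow_four (hu s).aestronglyMeasurable (hmom8 s)
  have hq : MemLp (fun ω => (β ⬝ᵥ u k ω) * (w ⬝ᵥ u t ω)) 4 μ :=
    (memLp_dotProduct (hL t) w).mul' (memLp_dotProduct (hL k) β)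
  set C := (∑ a, β a ^ 2) ^ 2 * (∑ a, w a ^ 2) ^ 2
  have hpt : ∀ ω, ((β ⬝ᵥ u k ω) * (w ⬝ᵥ u t ω)) ^ 4 ≤ C * ((N k ω ^ 4 + N t ω ^ 4) / 2) :=
    fun ω => calc
      ((β ⬝ᵥ u k ω) * (w ⬝ᵥ u t ω)) ^ 4 = ((β ⬝ᵥ u k ω) ^ 2 * (w ⬝ᵥ u t ω) ^ 2) ^ 2 := by ring
      _ ≤ ((∑ a, β a ^ 2) * N k ω * ((∑ a, w a ^ 2) * N t ω)) ^ 2 := by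
        gcongr
        exacts [sq_dotProduct_le β (u k ω), sq_dotProduct_le w (u t ω)]
      _ = C * (N k ω ^ 2 * N t ω ^ 2) := by ring
      _ ≤ C * ((N k ω ^ 4 + N t ω ^ 4) / 2) := by
        gcongr
        nlinarith [sq_nonneg (N k ω ^ 2 - N t ω ^ 2)]
  calc ∫ ω, ((β ⬝ᵥ u k ω) * (w ⬝ᵥ u t ω)) ^ 4 ∂μ
      ≤ ∫ ω, C * ((N k ω ^ 4 + N t ω ^ 4) / 2) ∂μ :=
        integral_mono hq.integrable_pow_four
          ((((hmom8 k).add (hmom8 t)).div_const 2).const_mul C) hpt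
    _ = C * ∫ ω, N t ω ^ 4 ∂μ := by
        rw [integral_const_mul, integral_div, integral_add (hmom8 k) (hmom8 t), hstat]
        ring
    _ = _ := by
        rw [mul_pow, mul_pow, Real.sq_sqrt (by positivity)]
        ring

variable [IsFiniteMeasure μ]

lemma isCenteredGivenOthers_dotProduct_mul (hu : ∀ t, Measurable (u t)) (hA1 : Assumption1 μ u)
    (hui : ∀ t, Integrable (u t) μ) (β : ℕ → Fin n → ℝ) {t : ℤ} {Y : Ω → ℝ}
    (hY : Measurable[sigmaGen u (Set.Iic t)] Y) :
    IsCenteredGivenOthers μ (fun ℓ : ℕ => sigmaGen u {s | s ≠ t + ℓ + 1})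
      (fun ℓ ω => (β ℓ ⬝ᵥ u (t + ℓ + 1) ω) * Y ω) := by
  have hYj : ∀ j : ℕ, Measurable[sigmaGen u {s | s ≠ t + j + 1}] Y := fun j =>
    hY.mono (sigmaGen_mono fun s (hs : s ≤ t) (hs' : s = t + j + 1) => by omega) le_rfl
  refine ⟨fun i j hij => (measurable_dotProduct_sigmaGen ?_ _).mul (hYj j), fun j F hF hFq => ?_⟩
  · show t + (i : ℤ) + 1 ≠ t + j + 1
    omega
  · rw [← integral_mul_dotProduct_eq_zero hu hA1 (hui _) (β j) (hF.mul (hYj j))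
      (hFq.congr (ae_of_all _ fun ω => by simp only [Pi.mul_apply]; ring))]
    exact integral_congr_ae (ae_of_all _ fun ω => by simp only [Pi.mul_apply]; ring)

-- The index `0 + ℓ + 1` is written as it appears in `xi … 0`, so that the right-hand side is `v²`.
lemma mul_le_integral_sum_sq_mul_sq (hu : ∀ t, Measurable (u t)) (hA1 : Assumption1 μ u)
    (hL : ∀ t, MemLp (u t) 8 μ) {δ : ℝ} (hδ0 : 0 ≤ δ)
    (hδ : ∀ t, ∀ᵐ ω ∂μ, δ ≤ lammin (condSecondMoment μ u t ω)) (β : ℕ → Fin n → ℝ)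
    (w : Fin n → ℝ) (h : ℕ) :
    δ * lammin (SigmaMat μ u) * (∑ a, w a ^ 2) * ∑ ℓ ∈ Finset.range h, ∑ a, β ℓ a ^ 2
      ≤ ∫ ω, (∑ ℓ ∈ Finset.range h, β ℓ ⬝ᵥ u (0 + ℓ + 1) ω) ^ 2 * (w ⬝ᵥ u 0 ω) ^ 2 ∂μ := by
  have hL2 : ∀ t, MemLp (u t) 2 μ := fun t => (hL t).mono_exponent (by norm_num)
  have hq : ∀ ℓ : ℕ, MemLp (fun ω => (β ℓ ⬝ᵥ u (0 + ℓ + 1) ω) * (w ⬝ᵥ u 0 ω)) 4 μ := fun ℓ =>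
    (memLp_dotProduct (hL 0) w).mul' (memLp_dotProduct (hL _) (β ℓ))
  have hc := isCenteredGivenOthers_dotProduct_mul hu hA1 (fun t => (hL t).integrable (by norm_num))
    β (t := 0) (measurable_dotProduct_sigmaGen Set.self_mem_Iic w)
  have hY : lammin (SigmaMat μ u) * ∑ a, w a ^ 2 ≤ ∫ ω, (w ⬝ᵥ u 0 ω) ^ 2 ∂μ :=
    dotProduct_SigmaMat_mulVec (hL2 0) w ▸ mul_sum_sq_le_of_le_lammin le_rfl w
  have hterm : ∀ ℓ : ℕ, δ * (∑ a, β ℓ a ^ 2) * (lammin (SigmaMat μ u) * ∑ a, w a ^ 2)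
      ≤ ∫ ω, ((β ℓ ⬝ᵥ u (0 + ℓ + 1) ω) * (w ⬝ᵥ u 0 ω)) ^ 2 ∂μ := fun ℓ => by
    have hF : Measurable[sigmaGen u {s | s < 0 + ℓ + 1}] fun ω => (w ⬝ᵥ u 0 ω) ^ 2 :=
      (measurable_dotProduct_sigmaGen (S := {s | s < 0 + ℓ + 1}) (s := 0) (by simp) w).pow_const 2
    calc δ * (∑ a, β ℓ a ^ 2) * (lammin (SigmaMat μ u) * ∑ a, w a ^ 2)
        ≤ δ * (∑ a, β ℓ a ^ 2) * ∫ ω, (w ⬝ᵥ u 0 ω) ^ 2 ∂μ := by gcongr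
      _ ≤ ∫ ω, (w ⬝ᵥ u 0 ω) ^ 2 * (β ℓ ⬝ᵥ u (0 + ℓ + 1) ω) ^ 2 ∂μ :=
        mul_sum_sq_mul_integral_le hu (hL2 _) (hδ _) (β ℓ) hF (fun ω => sq_nonneg _)
          (memLp_dotProduct (hL2 0) w).integrable_sq
          (((hq ℓ).mono_exponent (by norm_num)).integrable_sq.congr
            (ae_of_all _ fun ω => by ring))
      _ = ∫ ω, ((β ℓ ⬝ᵥ u (0 + ℓ + 1) ω) * (w ⬝ᵥ u 0 ω)) ^ 2 ∂μ :=
        integral_congr_ae (ae_of_all _ fun ω => by ring)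
  calc δ * lammin (SigmaMat μ u) * (∑ a, w a ^ 2) * ∑ ℓ ∈ Finset.range h, ∑ a, β ℓ a ^ 2
      = ∑ ℓ ∈ Finset.range h,
          δ * (∑ a, β ℓ a ^ 2) * (lammin (SigmaMat μ u) * ∑ a, w a ^ 2) := by
        rw [Finset.mul_sum]
        exact Finset.sum_congr rfl fun ℓ _ => by ring
    _ ≤ ∑ ℓ ∈ Finset.range h, ∫ ω, ((β ℓ ⬝ᵥ u (0 + ℓ + 1) ω) * (w ⬝ᵥ u 0 ω)) ^ 2 ∂μ :=
        Finset.sum_le_sum fun ℓ _ => hterm ℓ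
    _ = ∫ ω, (∑ ℓ ∈ Finset.range h, (β ℓ ⬝ᵥ u (0 + ℓ + 1) ω) * (w ⬝ᵥ u 0 ω)) ^ 2 ∂μ :=
        (hc.integral_sum_sq (fun ℓ => (hq ℓ).mono_exponent (by norm_num)) _).symm
    _ = _ := by simp_rw [← Finset.sum_mul, mul_pow]

lemma integral_sum_dotProduct_mul_pow_four_le (hu : ∀ t, Measurable (u t)) (hA1 : Assumption1 μ u)
    (hL : ∀ t, MemLp (u t) 8 μ) (β : ℕ → Fin n → ℝ) {t : ℤ} {Y : Ω → ℝ}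
    (hY : Measurable[sigmaGen u (Set.Iic t)] Y) (hYL : MemLp Y 8 μ) (h : ℕ) {c : ℕ → ℝ}
    (hc0 : ∀ ℓ, 0 ≤ c ℓ) (hc : ∀ ℓ, ∫ ω, ((β ℓ ⬝ᵥ u (t + ℓ + 1) ω) * Y ω) ^ 4 ∂μ ≤ c ℓ ^ 2) :
    ∫ ω, ((∑ ℓ ∈ Finset.range h, β ℓ ⬝ᵥ u (t + ℓ + 1) ω) * Y ω) ^ 4 ∂μ
      ≤ 3 * (∑ ℓ ∈ Finset.range h, c ℓ) ^ 2 := by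
  simp_rw [Finset.sum_mul]
  exact (isCenteredGivenOthers_dotProduct_mul hu hA1 (fun t => (hL t).integrable (by norm_num))
    β hY).integral_sum_pow_four_le_of_le (fun ℓ => hYL.mul' (memLp_dotProduct (hL _) (β ℓ))) _
    (fun ℓ _ => hc0 ℓ) (fun ℓ _ => hc ℓ)

lemma integral_dotProduct_pow_four_le (hu : ∀ t, Measurable (u t))
    (hst : StrictlyStationary μ u) (hmom8 : ∀ t, Integrable (fun ω => (∑ a, u t ω a ^ 2) ^ 4) μ)
    (β : Fin n → ℝ) (k t : ℤ) :
    ∫ ω, (β ⬝ᵥ u k ω) ^ 4 ∂μ ≤ ((∑ a, β a ^ 2) * √(∫ ω, (∑ a, u t ω a ^ 2) ^ 2 ∂μ)) ^ 2 := by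
  set N : ℤ → Ω → ℝ := fun s ω => ∑ a, u s ω a ^ 2
  have hN2 : ∀ s, Integrable (fun ω => N s ω ^ 2) μ := fun s =>
    ((integrable_const 1).add (hmom8 s)).mono' (by fun_prop) (ae_of_all _ fun ω => by
      rw [Real.norm_eq_abs, abs_of_nonneg (sq_nonneg _)]
      show N s ω ^ 2 ≤ 1 + N s ω ^ 4
      nlinarith [sq_nonneg (N s ω ^ 2 - 1)])
  have hstat : ∫ ω, N k ω ^ 2 ∂μ = ∫ ω, N t ω ^ 2 ∂μ :=
    hst.integral_comp_eq hu (g := fun x => (∑ a, x a ^ 2) ^ 2) (by fun_prop) k t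
  have hL : MemLp (fun ω => β ⬝ᵥ u k ω) 4 μ := memLp_dotProduct
    ((memLp_eight_of_integrable_sum_sq_pow_four (hu k).aestronglyMeasurable (hmom8 k)).mono_exponent
      (by norm_num)) β
  calc ∫ ω, (β ⬝ᵥ u k ω) ^ 4 ∂μ ≤ ∫ ω, (∑ a, β a ^ 2) ^ 2 * N k ω ^ 2 ∂μ := by
        refine integral_mono hL.integrable_pow_four ((hN2 k).const_mul _) fun ω => ?_
        calc (β ⬝ᵥ u k ω) ^ 4 = ((β ⬝ᵥ u k ω) ^ 2) ^ 2 := by ring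
          _ ≤ ((∑ a, β a ^ 2) * N k ω) ^ 2 := by gcongr; exact sq_dotProduct_le β (u k ω)
          _ = (∑ a, β a ^ 2) ^ 2 * N k ω ^ 2 := by ring
    _ = _ := by
        rw [integral_const_mul, hstat, mul_pow, Real.sq_sqrt (by positivity)]

end ForecastErrors

lemma inv_sqrt_pow_four_mul_le {N D B c e : ℝ} (hN : N ≤ 3 * (B * c) ^ 2) (hD : e * B ≤ D)
    (he : 0 < e) (hB : 0 ≤ B) : (√D)⁻¹ ^ 4 * N ≤ 3 * c ^ 2 / e ^ 2 := by
  -- `B = 0` is the horizon `h = 0`, where `v = 0` and `v⁻¹ = 0`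
  rcases hB.eq_or_lt with rfl | hB
  · rw [zero_mul, zero_pow two_ne_zero, mul_zero] at hN
    exact (mul_nonpos_of_nonneg_of_nonpos (by positivity) hN).trans (by positivity)
  · have hD0 : 0 < D := (mul_pos he hB).trans_le hD
    have hD2 : (e * B) ^ 2 ≤ D ^ 2 := pow_le_pow_left₀ (by positivity) hD 2
    rw [show (4 : ℕ) = 2 * 2 from rfl, pow_mul, inv_pow, Real.sq_sqrt hD0.le, inv_pow,
      inv_mul_eq_div, div_le_div_iff₀ (by positivity) (by positivity)]
    nlinarith [mul_le_mul_of_nonneg_right hN (sq_nonneg e),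
      mul_le_mul_of_nonneg_left hD2 (by positivity : (0 : ℝ) ≤ 3 * c ^ 2)]

section NormalizedMoments

variable {Ω : Type} [MeasurableSpace Ω] {μ : Measure Ω} [IsFiniteMeasure μ] {n p : ℕ}
  {u : ℤ → Ω → (Fin n → ℝ)} (hu : ∀ t, Measurable (u t)) (hst : StrictlyStationary μ u)
  (hA1 : Assumption1 μ u) (hmom8 : ∀ t, Integrable (fun ω => (∑ a, u t ω a ^ 2) ^ 4) μ)
  {δ : ℝ} (hδ : 0 ≤ δ) (hcond : ∀ t, ∀ᵐ ω ∂μ, δ ≤ lammin (condSecondMoment μ u t ω))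
  (hp : 0 < p) (A : Fin p → Matrix (Fin n) (Fin n) ℝ) (h : ℕ) (i : Fin n) {w : Fin n → ℝ}
  (he : 0 < δ * lammin (SigmaMat μ u) * ∑ a, w a ^ 2)
include hu hst hA1 hmom8 hδ hcond he

lemma integral_inv_vfun_mul_xi_mul_dotProduct_pow_four_le (t : ℤ) :
    ∫ ω, ((vfun μ hp A h i u w)⁻¹ * xi hp A h i u t ω * (w ⬝ᵥ u t ω)) ^ 4 ∂μ
      ≤ 3 * (∫ ω, (∑ a, u t ω a ^ 2) ^ 4 ∂μ) / (δ ^ 2 * lammin (SigmaMat μ u) ^ 2) := by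
  have hL : ∀ t, MemLp (u t) 8 μ := fun t =>
    memLp_eight_of_integrable_sum_sq_pow_four (hu t).aestronglyMeasurable (hmom8 t)
  have hN := integral_sum_dotProduct_mul_pow_four_le hu hA1 hL (fun ℓ => irf hp A (h - 1 - ℓ) i)
    (measurable_dotProduct_sigmaGen Set.self_mem_Iic w) (memLp_dotProduct (hL t) w) h
    (c := fun ℓ => (∑ a, irf hp A (h - 1 - ℓ) i a ^ 2)
      * ((∑ a, w a ^ 2) * √(∫ ω, (∑ a, u t ω a ^ 2) ^ 4 ∂μ))) (fun ℓ => by positivity)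
    (fun ℓ => integral_dotProduct_mul_dotProduct_pow_four_le hu hst hmom8 _ w _ t)
  rw [← Finset.sum_mul] at hN
  simp_rw [mul_assoc, mul_pow (vfun μ hp A h i u w)⁻¹, integral_const_mul]
  calc _ ≤ 3 * ((∑ a, w a ^ 2) * √(∫ ω, (∑ a, u t ω a ^ 2) ^ 4 ∂μ)) ^ 2
        / (δ * lammin (SigmaMat μ u) * ∑ a, w a ^ 2) ^ 2 :=
        inv_sqrt_pow_four_mul_le hN (mul_le_integral_sum_sq_mul_sq hu hA1 hL hδ hcond _ w h) he
          (by positivity)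
    _ = _ := by
        have hw : ∑ a, w a ^ 2 ≠ 0 := right_ne_zero_of_mul he.ne'
        rw [mul_pow, Real.sq_sqrt (by positivity)]
        field_simp

lemma integral_inv_vfun_mul_xi_pow_four_le (t : ℤ) :
    ∫ ω, ((vfun μ hp A h i u w)⁻¹ * xi hp A h i u t ω) ^ 4 ∂μ
      ≤ 3 * (∫ ω, (∑ a, u t ω a ^ 2) ^ 2 ∂μ)
        / (δ ^ 2 * lammin (SigmaMat μ u) ^ 2 * euclNorm w ^ 4) := by
  have hL : ∀ t, MemLp (u t) 8 μ := fun t =>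
    memLp_eight_of_integrable_sum_sq_pow_four (hu t).aestronglyMeasurable (hmom8 t)
  have hN := integral_sum_dotProduct_mul_pow_four_le hu hA1 hL (fun ℓ => irf hp A (h - 1 - ℓ) i)
    (t := t) (Y := fun _ => 1) measurable_const (memLp_const 1) h
    (c := fun ℓ => (∑ a, irf hp A (h - 1 - ℓ) i a ^ 2) * √(∫ ω, (∑ a, u t ω a ^ 2) ^ 2 ∂μ))
    (fun ℓ => by positivity)
    (fun ℓ => by simpa only [mul_one] using integral_dotProduct_pow_four_le hu hst hmom8 _ _ t)
  simp only [mul_one, ← Finset.sum_mul] at hN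
  simp_rw [mul_pow (vfun μ hp A h i u w)⁻¹, integral_const_mul]
  calc _ ≤ 3 * √(∫ ω, (∑ a, u t ω a ^ 2) ^ 2 ∂μ) ^ 2
        / (δ * lammin (SigmaMat μ u) * ∑ a, w a ^ 2) ^ 2 :=
        inv_sqrt_pow_four_mul_le hN (mul_le_integral_sum_sq_mul_sq hu hA1 hL hδ hcond _ w h) he
          (by positivity)
    _ = _ := by
        rw [Real.sq_sqrt (by positivity), euclNorm,
          show (4 : ℕ) = 2 * 2 from rfl, pow_mul, Real.sq_sqrt (by positivity)]
        ring

end NormalizedMoments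

end LP

open LP in
theorem statement12_general
    {Ω : Type} [MeasurableSpace Ω] (μ : Measure Ω) [IsProbabilityMeasure μ]
    (n p : ℕ) (hp : 0 < p)
    (u : ℤ → Ω → (Fin n → ℝ)) (hu_meas : ∀ t, Measurable (u t))
    (hu_stat : StrictlyStationary μ u)
    (hA1 : Assumption1 μ u)
    -- Assumption 2(i)
    (δ : ℝ) (hδ : 0 < δ)
    (hmom8 : ∀ t : ℤ, Integrable (fun ω => (∑ a, (u t ω a) ^ 2) ^ 4) μ)
    (hcond : ∀ t : ℤ, ∀ᵐ ω ∂μ, δ ≤ lammin (condSecondMoment μ u t ω))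
    (Cb ε : ℝ) :
    ∀ (h : ℕ), ∀ A ∈ paramSpace n p 0 Cb ε, ∀ (i : Fin n) (w : Fin n → ℝ), w ≠ 0 →
      ∀ t : ℤ,
      (∫ ω, ((vfun μ hp A h i u w)⁻¹ * xi hp A h i u t ω * (w ⬝ᵥ u t ω)) ^ 4 ∂μ
          ≤ 6 * (∫ ω, (∑ a, (u t ω a) ^ 2) ^ 4 ∂μ)
            / (δ ^ 2 * (lammin (SigmaMat μ u)) ^ 2)) ∧
      (∫ ω, ((vfun μ hp A h i u w)⁻¹ * xi hp A h i u t ω) ^ 4 ∂μ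
          ≤ 6 * (∫ ω, (∑ a, (u t ω a) ^ 2) ^ 2 ∂μ)
            / (δ ^ 2 * (lammin (SigmaMat μ u)) ^ 2 * (euclNorm w) ^ 4)) := by
  intro h A _ i w hw t
  have he := mul_lammin_SigmaMat_mul_sum_sq_pos hu_meas hmom8 hδ (hcond 0) hw
  constructor
  · refine (integral_inv_vfun_mul_xi_mul_dotProduct_pow_four_le hu_meas hu_stat hA1 hmom8 hδ.le
      hcond hp A h i he t).trans ?_
    gcongr
    norm_num
  · refine (integral_inv_vfun_mul_xi_pow_four_le hu_meas hu_stat hA1 hmom8 hδ.le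
      hcond hp A h i he t).trans ?_
    gcongr
    norm_num

open LP in
/-- Lemma 7 (uniform fourth-moment bounds for the scores and forecast errors). -/
theorem statement12
    {Ω : Type} [MeasurableSpace Ω] (μ : Measure Ω) [IsProbabilityMeasure μ]
    (n p : ℕ) (hn : 0 < n) (hp : 0 < p)
    (u : ℤ → Ω → (Fin n → ℝ)) (hu_meas : ∀ t, Measurable (u t))
    (hu_stat : StrictlyStationary μ u)
    (hA1 : Assumption1 μ u)
    -- Assumption 2(i)
    (δ : ℝ) (hδ : 0 < δ)
    (hmom8 : ∀ t : ℤ, Integrable (fun ω => (∑ a, (u t ω a) ^ 2) ^ 4) μ)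
    (hcond : ∀ t : ℤ, ∀ᵐ ω ∂μ, δ ≤ lammin (condSecondMoment μ u t ω))
    (Cb ε : ℝ) (hCb : 0 < Cb) (hε0 : 0 < ε) (hε1 : ε < 1) :
    ∀ (h : ℕ), ∀ A ∈ paramSpace n p 0 Cb ε, ∀ (i : Fin n) (w : Fin n → ℝ), w ≠ 0 →
      ∀ t : ℤ,
      (∫ ω, ((vfun μ hp A h i u w)⁻¹ * xi hp A h i u t ω * (w ⬝ᵥ u t ω)) ^ 4 ∂μ
          ≤ 6 * (∫ ω, (∑ a, (u t ω a) ^ 2) ^ 4 ∂μ)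
            / (δ ^ 2 * (lammin (SigmaMat μ u)) ^ 2)) ∧
      (∫ ω, ((vfun μ hp A h i u w)⁻¹ * xi hp A h i u t ω) ^ 4 ∂μ
          ≤ 6 * (∫ ω, (∑ a, (u t ω a) ^ 2) ^ 2 ∂μ)
            / (δ ^ 2 * (lammin (SigmaMat μ u)) ^ 2 * (euclNorm w) ^ 4)) :=
  statement12_general μ n p hp u hu_meas hu_stat hA1 δ hδ hmom8 hcond Cb ε
end
end

section
/- (Exact finite-sample decomposition of the lag-augmented local projection estimator.) Suppose the data y_1, …, y_T is generated by the VAR(p) model with coefficient matrix A. Fix a horizon h with 1 ≤ h < T, and suppose the matrices Σ_{t=1}^{T−h} X_t X_t' and Σ_{t=1}^{T−h} û_t(h) û_t(h)' are invertible. Then the lag-augmented local projection estimator satisfies the exact identity β̂_1(h) = β_1(A,h) + ( Σ_{t=1}^{T−h} û_t(h) û_t(h)' )^{−1} Σ_{t=1}^{T−h} û_t(h) ξ_{1,t}(A,h), where β̂_1(h) = ( Σ_{t=1}^{T−h} û_t(h) û_t(h)' )^{−1} Σ_{t=1}^{T−h} û_t(h) y_{1,t+h}. -/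
open MeasureTheory Filter Finset Matrix Topology

noncomputable section

namespace LP

variable {Ω : Type} [MeasurableSpace Ω] {n : ℕ}

/-- `Σ_{t=1}^{T−h} û_t(h) û_t(h)'`. -/
def uuMat (p : ℕ) (y : ℤ → Ω → (Fin n → ℝ)) (T h : ℕ) (ω : Ω) :
    Matrix (Fin n) (Fin n) ℝ :=
  Matrix.of fun a b => sumT T h fun t => uhat p y T h t ω a * uhat p y T h t ω b

/-- The lag-augmented LP estimator in its Frisch–Waugh form
`β̂_1(h) = (Σ û û')^{−1} Σ û y_{1,t+h}`. -/
def betaHatFW (p : ℕ) (hn : 0 < n) (y : ℤ → Ω → (Fin n → ℝ)) (T h : ℕ) (ω : Ω) :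
    Fin n → ℝ :=
  (uuMat p y T h ω)⁻¹.mulVec fun a =>
    sumT T h fun t => uhat p y T h t ω a * y (t + (h : ℤ)) ω ⟨0, hn⟩

end LP

/-! In companion form the VAR reads `Y_t = 𝐀 Y_{t-1} + J' u_t` for the state
`Y_t = (y_t', y_{t-1}', …, y_{t-p+1}')'`, so iterating `h` times gives
`y_{1,t+h} = e_1' J 𝐀^h Y_t + ξ_{1,t}(A,h)`. Every block of `Y_t` but the first is a block of `X_t`,
to which the residuals `û_t(h)` are orthogonal by the normal equations of the VAR regression; these
also give `Σ û_t y_t' = Σ û_t û_t'`. Multiplying the representation by `û_t(h)` and summing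
therefore yields `Σ û_t y_{1,t+h} = (Σ û_t û_t') β_1(A,h) + Σ û_t ξ_{1,t}(A,h)`. -/

namespace LP

section LeastSquares

variable {ι κ m : Type*} [Fintype κ]
  (s : Finset ι) (x : ι → κ → ℝ) (z : ι → m → ℝ)

def gram : Matrix κ κ ℝ := Matrix.of fun q r => ∑ i ∈ s, x i q * x i r

def crossGram : Matrix m κ ℝ := Matrix.of fun a q => ∑ i ∈ s, z i a * x i q

def olsCoef [DecidableEq κ] : Matrix m κ ℝ := crossGram s x z * (gram s x)⁻¹

def olsResidual [DecidableEq κ] (i : ι) : m → ℝ := z i - olsCoef s x z *ᵥ x i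

variable {s x z}

theorem sum_mulVec_mul_eq_mul_gram (B : Matrix m κ ℝ) (a : m) (q : κ) :
    ∑ i ∈ s, (B *ᵥ x i) a * x i q = (B * gram s x) a q := by
  simp only [Matrix.mul_apply, gram, Matrix.of_apply, Matrix.mulVec, dotProduct,
    Finset.sum_mul, Finset.mul_sum, mul_assoc]
  exact Finset.sum_comm

theorem sum_olsResidual_mul_regressor [DecidableEq κ] (hG : IsUnit (gram s x).det)
    (a : m) (q : κ) :
    ∑ i ∈ s, olsResidual s x z i a * x i q = 0 := by
  have hB : olsCoef s x z * gram s x = crossGram s x z := by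
    rw [olsCoef, Matrix.mul_assoc, Matrix.nonsing_inv_mul _ hG, Matrix.mul_one]
  simp only [olsResidual, Pi.sub_apply, sub_mul, Finset.sum_sub_distrib,
    sum_mulVec_mul_eq_mul_gram, hB]
  exact sub_self _

theorem sum_olsResidual_mul_response [DecidableEq κ] (hG : IsUnit (gram s x).det) (a b : m) :
    ∑ i ∈ s, olsResidual s x z i a * z i b
      = ∑ i ∈ s, olsResidual s x z i a * olsResidual s x z i b := by
  have hfit : ∑ i ∈ s, olsResidual s x z i a * (olsCoef s x z *ᵥ x i) b = 0 := by
    simp only [Matrix.mulVec, dotProduct, Finset.mul_sum, mul_left_comm _ (olsCoef s x z b _)]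
    rw [Finset.sum_comm]
    exact Finset.sum_eq_zero fun q _ => by
      rw [← Finset.mul_sum, sum_olsResidual_mul_regressor hG, mul_zero]
  simp only [olsResidual, Pi.sub_apply, mul_sub, Finset.sum_sub_distrib] at hfit ⊢
  rw [hfit, sub_zero]

end LeastSquares

section CompanionForm

variable {n : ℕ}

theorem companion_mulVec_apply_of_val_eq_zero {m : ℕ} (M : Fin m → Matrix (Fin n) (Fin n) ℝ)
    (v : Fin m × Fin n → ℝ) {j : Fin m} (hj : (j : ℕ) = 0) (a : Fin n) :
    (companion M *ᵥ v) (j, a) = (∑ ℓ, M ℓ *ᵥ fun b => v (ℓ, b)) a := by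
  simp only [Matrix.mulVec, dotProduct, companion, Matrix.of_apply, hj, if_true,
    Finset.sum_apply, Fintype.sum_prod_type]

theorem companion_mulVec_apply_succ {m : ℕ} (M : Fin m → Matrix (Fin n) (Fin n) ℝ)
    (v : Fin m × Fin n → ℝ) {k : ℕ} (hk : k + 1 < m) (a : Fin n) :
    (companion M *ᵥ v) (⟨k + 1, hk⟩, a) = v (⟨k, by omega⟩, a) := by
  simp only [Matrix.mulVec, dotProduct, companion, Matrix.of_apply, Nat.succ_ne_zero,
    if_false, Nat.succ_inj, ite_mul, one_mul, zero_mul]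
  rw [Finset.sum_eq_single (⟨⟨k, by omega⟩, a⟩ : Fin m × Fin n)]
  · simp
  · rintro ⟨j, b⟩ - hjb
    split_ifs with hj hb
    · exact absurd (Prod.ext (Fin.ext hj.symm) hb.symm) hjb
    all_goals rfl
  · simp

/-- The vector `J' v`. -/
def firstBlock (p : ℕ) (v : Fin n → ℝ) : Fin p × Fin n → ℝ :=
  fun q => if (q.1 : ℕ) = 0 then v q.2 else 0

theorem dotProduct_firstBlock {p : ℕ} (hp : 0 < p) (c : Fin p × Fin n → ℝ) (v : Fin n → ℝ) :
    c ⬝ᵥ firstBlock p v = (fun b => c (⟨0, hp⟩, b)) ⬝ᵥ v := by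
  simp only [dotProduct, firstBlock, mul_ite, mul_zero, Fintype.sum_prod_type]
  rw [Finset.sum_eq_single (⟨0, hp⟩ : Fin p)]
  · simp
  · intro j _ hj
    simp [Fin.val_ne_iff.mpr hj]
  · simp

end CompanionForm

section VARProcess

variable {Ω : Type} {n p : ℕ}

def state (p : ℕ) (y : ℤ → Ω → (Fin n → ℝ)) (t : ℤ) (ω : Ω) : Fin p × Fin n → ℝ :=
  fun q => y (t - ((q.1 : ℕ) : ℤ)) ω q.2

theorem state_apply_zero (y : ℤ → Ω → (Fin n → ℝ)) (t : ℤ) (ω : Ω) (hp : 0 < p)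
    (b : Fin n) : state p y t ω (⟨0, hp⟩, b) = y t ω b := by
  simp [state]

theorem state_apply_succ (y : ℤ → Ω → (Fin n → ℝ)) (t : ℤ) (ω : Ω) {k : ℕ} (hk : k + 1 < p)
    (b : Fin n) : state p y t ω (⟨k + 1, hk⟩, b) = Xt p y t ω (⟨k, by omega⟩, b) := by
  simp only [state, Xt]
  push_cast
  rfl

variable {u : ℤ → Ω → (Fin n → ℝ)} {A : Fin p → Matrix (Fin n) (Fin n) ℝ}
  {y : ℤ → Ω → (Fin n → ℝ)}

theorem state_eq_companion_mulVec_add (hy : IsVARProcess u A y) (ω : Ω) {t : ℤ} (ht : 1 ≤ t) :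
    state p y t ω = companion A *ᵥ state p y (t - 1) ω + firstBlock p (u t ω) := by
  funext ⟨⟨j, hj⟩, a⟩
  cases j with
  | zero =>
    have hlag : ∀ ℓ : Fin p, (fun b => state p y (t - 1) ω (ℓ, b)) = y (t - ((ℓ : ℕ) + 1)) ω :=
      fun ℓ => funext fun b => by simp only [state, sub_sub, add_comm (1 : ℤ)]
    rw [Pi.add_apply, companion_mulVec_apply_of_val_eq_zero _ _ rfl, state_apply_zero,
      hy.2 t ht ω]
    simp only [hlag, firstBlock, if_true, Pi.add_apply]
  | succ k =>
    rw [Pi.add_apply, companion_mulVec_apply_succ]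
    simp only [state, firstBlock, Nat.succ_ne_zero, if_false, add_zero]
    rw [Nat.cast_succ, sub_sub, add_comm (1 : ℤ)]

theorem state_add (hy : IsVARProcess u A y) (ω : Ω) {t : ℤ} (ht : 0 ≤ t) (h : ℕ) :
    state p y (t + h) ω = (companion A ^ h) *ᵥ state p y t ω
      + ∑ ℓ ∈ Finset.range h, (companion A ^ (h - 1 - ℓ)) *ᵥ firstBlock p (u (t + ℓ + 1) ω) := by
  induction h with
  | zero => simp
  | succ h ih =>
    have hshift : t + ((h + 1 : ℕ) : ℤ) = t + h + 1 := by push_cast; ring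
    rw [hshift, state_eq_companion_mulVec_add hy ω (by omega), add_sub_cancel_right, ih,
      Matrix.mulVec_add, Matrix.mulVec_mulVec, ← pow_succ', Matrix.mulVec_sum,
      Finset.sum_range_succ, add_assoc]
    congr 2
    · refine Finset.sum_congr rfl fun ℓ hℓ => ?_
      rw [Matrix.mulVec_mulVec, ← pow_succ']
      congr 2
      have := Finset.mem_range.mp hℓ
      omega
    · simp

theorem y_add_eq_dotProduct_state_add_xi (hp : 0 < p) (hy : IsVARProcess u A y) (ω : Ω)
    {t : ℤ} (ht : 0 ≤ t) (h : ℕ) (i : Fin n) :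
    y (t + h) ω i = (companion A ^ h) (⟨0, hp⟩, i) ⬝ᵥ state p y t ω + xi hp A h i u t ω := by
  rw [← state_apply_zero y (t + h) ω hp, state_add hy ω ht, Pi.add_apply, Finset.sum_apply]
  congr 1
  exact Finset.sum_congr rfl fun ℓ _ => dotProduct_firstBlock hp _ _

end VARProcess

section Residuals

variable {Ω : Type} {n p : ℕ} {y : ℤ → Ω → (Fin n → ℝ)} {T h : ℕ} {ω : Ω}

/- `Ahat` and `uhat` are, definitionally, `olsCoef` and `olsResidual` for the sample
`x s = X_{s+1}`, `z s = y_{s+1}`, `s < T - h`. -/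

theorem sum_uhat_mul_Xt (hXX : IsUnit (XXhmat p y T h ω).det) (a : Fin n) (q : Fin p × Fin n) :
    (sumT T h fun t => uhat p y T h t ω a * Xt p y t ω q) = 0 :=
  sum_olsResidual_mul_regressor (z := fun s : ℕ => y (s + 1) ω) hXX a q

theorem sum_uhat_mul_y (hXX : IsUnit (XXhmat p y T h ω).det) (a b : Fin n) :
    (sumT T h fun t => uhat p y T h t ω a * y t ω b) = uuMat p y T h ω a b :=
  sum_olsResidual_mul_response (z := fun s : ℕ => y (s + 1) ω) hXX a b

theorem sum_uhat_mul_state (hXX : IsUnit (XXhmat p y T h ω).det) (a : Fin n)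
    (r : Fin p × Fin n) :
    (sumT T h fun t => uhat p y T h t ω a * state p y t ω r)
      = firstBlock p (uuMat p y T h ω a) r := by
  obtain ⟨⟨j, hj⟩, b⟩ := r
  cases j with
  | zero =>
    simp only [state_apply_zero, sum_uhat_mul_y hXX, firstBlock, if_true]
  | succ k =>
    simp only [state_apply_succ, sum_uhat_mul_Xt hXX, firstBlock, Nat.succ_ne_zero, if_false]

theorem sum_uhat_mul_dotProduct_state (hp : 0 < p) (hXX : IsUnit (XXhmat p y T h ω).det)
    (a : Fin n) (c : Fin p × Fin n → ℝ) :
    (sumT T h fun t => uhat p y T h t ω a * (c ⬝ᵥ state p y t ω))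
      = (fun b => c (⟨0, hp⟩, b)) ⬝ᵥ uuMat p y T h ω a := by
  rw [← dotProduct_firstBlock hp, ← funext (sum_uhat_mul_state hXX a)]
  simp only [sumT, dotProduct, Finset.mul_sum]
  rw [Finset.sum_comm]
  simp only [mul_left_comm]

end Residuals

end LP

open LP in
theorem statement15_general
    {Ω : Type}
    (n p : ℕ) (hn : 0 < n) (hp : 0 < p)
    (u : ℤ → Ω → (Fin n → ℝ))
    (A : Fin p → Matrix (Fin n) (Fin n) ℝ)
    (y : ℤ → Ω → (Fin n → ℝ)) (hy : IsVARProcess u A y)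
    (T h : ℕ) (ω : Ω)
    (hXX : IsUnit (XXhmat p y T h ω).det)
    (huu : IsUnit (uuMat p y T h ω).det) :
    betaHatFW p hn y T h ω
      = irf hp A h ⟨0, hn⟩ +
        (uuMat p y T h ω)⁻¹.mulVec fun a =>
          sumT T h fun t => uhat p y T h t ω a * xi hp A h ⟨0, hn⟩ u t ω := by
  have hscore : (fun a => sumT T h fun t => uhat p y T h t ω a * y (t + h) ω ⟨0, hn⟩)
      = uuMat p y T h ω *ᵥ irf hp A h ⟨0, hn⟩
        + fun a => sumT T h fun t => uhat p y T h t ω a * xi hp A h ⟨0, hn⟩ u t ω := by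
    funext a
    calc (sumT T h fun t => uhat p y T h t ω a * y (t + h) ω ⟨0, hn⟩)
        = (sumT T h fun t => uhat p y T h t ω a
              * ((companion A ^ h) (⟨0, hp⟩, ⟨0, hn⟩) ⬝ᵥ state p y t ω))
          + sumT T h fun t => uhat p y T h t ω a * xi hp A h ⟨0, hn⟩ u t ω := by
          simp only [sumT, ← Finset.sum_add_distrib, ← mul_add]
          refine Finset.sum_congr rfl fun s _ => ?_
          rw [y_add_eq_dotProduct_state_add_xi hp hy ω (by positivity)]
      _ = _ := by
          rw [sum_uhat_mul_dotProduct_state hp hXX, dotProduct_comm]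
          rfl
  rw [betaHatFW, hscore, Matrix.mulVec_add, Matrix.mulVec_mulVec, Matrix.nonsing_inv_mul _ huu,
    Matrix.one_mulVec]

open LP in
/-- Exact finite-sample decomposition of the lag-augmented LP estimator:
`β̂_1(h) = β_1(A,h) + (Σ û û')^{−1} Σ û_t(h) ξ_{1,t}(A,h)`. -/
theorem statement15
    {Ω : Type} [MeasurableSpace Ω]
    (n p : ℕ) (hn : 0 < n) (hp : 0 < p)
    (u : ℤ → Ω → (Fin n → ℝ))
    (A : Fin p → Matrix (Fin n) (Fin n) ℝ)
    (y : ℤ → Ω → (Fin n → ℝ)) (hy : IsVARProcess u A y)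
    (T h : ℕ) (hh1 : 1 ≤ h) (hhT : h < T) (ω : Ω)
    (hXX : IsUnit (XXhmat p y T h ω).det)
    (huu : IsUnit (uuMat p y T h ω).det) :
    betaHatFW p hn y T h ω
      = irf hp A h ⟨0, hn⟩ +
        (uuMat p y T h ω)⁻¹.mulVec fun a =>
          sumT T h fun t => uhat p y T h t ω a * xi hp A h ⟨0, hn⟩ u t ω :=
  statement15_general n p hn hp u A y hy T h ω hXX huu
end
end

section
/- (Relative asymptotic efficiency of lag-augmented LP versus lag-augmented AR.) Let h ≥ 1 be an integer and ρ a real number with 0 < |ρ| < 1. Then Σ_{ℓ=0}^{h−1} ρ^{2ℓ} ≤ (h ρ^{h−1})² if and only if Σ_{m=0}^{h−1} ρ^{−2m} ≤ h². Moreover, for each integer h ≥ 2, the map r ↦ Σ_{m=0}^{h−1} r^{−2m} is strictly decreasing on (0,1] with limit +∞ as r → 0+ and value h at r = 1, so there exists a unique ρ̲(h) ∈ (0,1) such that Σ_{m=0}^{h−1} ρ̲(h)^{−2m} = h², and for all ρ with 0 < |ρ| < 1: Σ_{m=0}^{h−1} |ρ|^{−2m} ≤ h² if and only if |ρ| ≥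 ρ̲(h). -/
/-!
Writing `S(ρ) = Σ_{m<h} ρ^{-2m}`, reflecting the index of the geometric sum gives
`Σ_{ℓ<h} ρ^{2ℓ} = ρ^{2(h-1)} S(ρ)`, so the variance comparison is `S(ρ) ≤ h²` after cancelling
the positive factor `ρ^{2(h-1)}`. For `h ≥ 2` the term `ρ^{-2}` makes `S` strictly decreasing on
`(0, ∞)` and unbounded at `0⁺`, while `S(1) = h < h²`; the intermediate value theorem yields the
cutoff, and strict monotonicity its uniqueness and the threshold characterisation.
-/

open Filter Finset Topology

lemma geom_sum_eq_pow_mul_sum_inv_pow {K : Type*} [Field K] {x : K} (hx : x ≠ 0) (n : ℕ) :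
    ∑ ℓ ∈ range n, x ^ ℓ = x ^ (n - 1) * ∑ m ∈ range n, (x ^ m)⁻¹ := by
  rw [mul_sum, ← sum_range_reflect]
  refine sum_congr rfl fun j hj => ?_
  have hj : j < n := mem_range.mp hj
  rw [eq_mul_inv_iff_mul_eq₀ (pow_ne_zero _ hx), ← pow_add]
  congr 1
  omega

lemma sum_pow_two_mul_le_sq_iff {ρ : ℝ} (hρ : ρ ≠ 0) (h : ℕ) :
    ∑ ℓ ∈ range h, ρ ^ (2 * ℓ) ≤ ((h : ℝ) * ρ ^ (h - 1)) ^ 2 ↔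
      ∑ m ∈ range h, (ρ ^ (2 * m))⁻¹ ≤ (h : ℝ) ^ 2 := by
  have hρ2 : ρ ^ 2 ≠ 0 := pow_ne_zero 2 hρ
  simp_rw [pow_mul]
  rw [geom_sum_eq_pow_mul_sum_inv_pow hρ2, mul_pow, ← pow_mul ρ (h - 1), mul_comm (h - 1) 2,
    pow_mul, mul_comm ((h : ℝ) ^ 2), mul_le_mul_iff_right₀ (pow_pos (by positivity) _)]

lemma ContinuousOn.exists_mem_Ioo_eq_of_tendsto_atTop {f : ℝ → ℝ} {a b y : ℝ} (hab : a < b)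
    (hf : ContinuousOn f (Set.Ioc a b)) (hlim : Tendsto f (𝓝[>] a) atTop) (hb : f b < y) :
    ∃ c ∈ Set.Ioo a b, f c = y := by
  obtain ⟨r, hyr, hr⟩ : ∃ r, y ≤ f r ∧ r ∈ Set.Ioo a b :=
    ((hlim.eventually_ge_atTop y).and (Ioo_mem_nhdsGT hab)).exists
  obtain ⟨c, hc, hfc⟩ := intermediate_value_Icc' hr.2.le
    (hf.mono fun x hx => ⟨hr.1.trans_le hx.1, hx.2⟩) ⟨hb.le, hyr⟩
  refine ⟨c, ⟨hr.1.trans_le hc.1, hc.2.lt_of_ne ?_⟩, hfc⟩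
  rintro rfl
  exact hb.ne hfc

section InvEvenPowSum

variable {h : ℕ}

lemma continuousOn_sum_inv_pow_two_mul :
    ContinuousOn (fun r : ℝ => ∑ m ∈ range h, (r ^ (2 * m))⁻¹) (Set.Ioi 0) := by
  fun_prop (disch := intro x hx; exact pow_ne_zero _ (ne_of_gt hx))

lemma strictAntiOn_sum_inv_pow_two_mul (hh : 2 ≤ h) :
    StrictAntiOn (fun r : ℝ => ∑ m ∈ range h, (r ^ (2 * m))⁻¹) (Set.Ioi 0) := by
  intro x hx y _ hxy
  refine sum_lt_sum (fun m _ => ?_) ⟨1, mem_range.mpr hh, ?_⟩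
  · exact inv_anti₀ (pow_pos hx _) (pow_le_pow_left₀ hx.le hxy.le _)
  · exact inv_strictAnti₀ (pow_pos hx _) (pow_lt_pow_left₀ hxy hx.le (by norm_num))

lemma tendsto_sum_inv_pow_two_mul_nhdsGT_zero (hh : 2 ≤ h) :
    Tendsto (fun r : ℝ => ∑ m ∈ range h, (r ^ (2 * m))⁻¹) (𝓝[>] 0) atTop := by
  have hterm : Tendsto (fun r : ℝ => (r ^ (2 * 1))⁻¹) (𝓝[>] 0) atTop := by
    simpa only [Function.comp_def, inv_pow] using
      (tendsto_pow_atTop (α := ℝ) (n := 2 * 1) (by norm_num)).comp tendsto_inv_nhdsGT_zero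
  refine tendsto_atTop_mono' _ ?_ hterm
  filter_upwards [self_mem_nhdsWithin] with r (hr : (0 : ℝ) < r)
  exact single_le_sum (f := fun m => (r ^ (2 * m))⁻¹) (fun m _ => by positivity)
    (mem_range.mpr hh)

end InvEvenPowSum

/-- Relative asymptotic efficiency of lag-augmented LP versus lag-augmented AR
in the stationary homoskedastic AR(1) model: the variance comparison
`Σ_{ℓ=0}^{h−1} ρ^{2ℓ} ≤ (h ρ^{h−1})²` is equivalent to `Σ_{m=0}^{h−1} ρ^{−2m} ≤ h²`;
and for each `h ≥ 2` there is a unique cutoff `ρ̲(h) ∈ (0,1)` characterizing it. -/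
theorem statement16 :
    (∀ (h : ℕ) (ρ : ℝ), 1 ≤ h → 0 < |ρ| → |ρ| < 1 →
      ((∑ ℓ ∈ Finset.range h, ρ ^ (2 * ℓ)) ≤ ((h : ℝ) * ρ ^ (h - 1)) ^ 2 ↔
        (∑ m ∈ Finset.range h, (ρ ^ (2 * m))⁻¹) ≤ (h : ℝ) ^ 2)) ∧
    (∀ h : ℕ, 2 ≤ h →
      StrictAntiOn (fun r : ℝ => ∑ m ∈ Finset.range h, (r ^ (2 * m))⁻¹) (Set.Ioc 0 1) ∧
      Tendsto (fun r : ℝ => ∑ m ∈ Finset.range h, (r ^ (2 * m))⁻¹) (𝓝[>] 0) atTop ∧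
      (∑ m ∈ Finset.range h, ((1 : ℝ) ^ (2 * m))⁻¹) = (h : ℝ) ∧
      ∃ c : ℝ, c ∈ Set.Ioo (0 : ℝ) 1 ∧
        (∑ m ∈ Finset.range h, (c ^ (2 * m))⁻¹) = (h : ℝ) ^ 2 ∧
        (∀ c' ∈ Set.Ioo (0 : ℝ) 1,
          (∑ m ∈ Finset.range h, (c' ^ (2 * m))⁻¹) = (h : ℝ) ^ 2 → c' = c) ∧
        (∀ ρ : ℝ, 0 < |ρ| → |ρ| < 1 →
          ((∑ m ∈ Finset.range h, (|ρ| ^ (2 * m))⁻¹) ≤ (h : ℝ) ^ 2 ↔ c ≤ |ρ|))) := by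
  refine ⟨fun h ρ _ hρ _ => sum_pow_two_mul_le_sq_iff (abs_pos.mp hρ) h, fun h hh => ?_⟩
  have hanti := strictAntiOn_sum_inv_pow_two_mul hh
  have hlim := tendsto_sum_inv_pow_two_mul_nhdsGT_zero hh
  have hone : ∑ m ∈ range h, ((1 : ℝ) ^ (2 * m))⁻¹ = h := by simp
  have hh_lt_sq : (h : ℝ) < (h : ℝ) ^ 2 := by
    have : (2 : ℝ) ≤ h := by exact_mod_cast hh
    nlinarith
  obtain ⟨c, hc, hfc⟩ := (continuousOn_sum_inv_pow_two_mul.mono Set.Ioc_subset_Ioi_self)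
    |>.exists_mem_Ioo_eq_of_tendsto_atTop one_pos hlim (by rwa [hone])
  refine ⟨hanti.mono Set.Ioc_subset_Ioi_self, hlim, hone, c, hc, hfc, fun c' hc' hfc' => ?_,
    fun ρ hρ _ => ?_⟩
  · exact hanti.injOn hc'.1 hc.1 (hfc'.trans hfc.symm)
  · rw [← hfc]
    exact hanti.le_iff_ge hρ hc.1
end

section
/- (Existence of the efficiency cutoff between lag-augmented and non-augmented LP.) For each integer h ≥ 2, the map r ↦ Σ_{ℓ=1}^{h−1} r^{−2ℓ} is strictly decreasing on (0,1) with limit +∞ as r → 0+ and limit h−1 < 2h−1 as r → 1−; hence there exists a unique ρ̄(h) ∈ (0,1) such that Σ_{ℓ=1}^{h−1} ρ̄(h)^{−2ℓ} = 2h−1, and for all ρ with 0 < |ρ| < 1: Σ_{ℓ=1}^{h−1} |ρ|^{−2ℓ} ≥ 2h−1 if and only if |ρ| ≤ ρ̄(h). Equivalently, the asymptotic variance of lag-augmented LP, Σ_{ℓ=0}^{h−1} ρ^{2ℓ}, is at most that of non-augmented LP, Σ_{ℓ=0}^{h−1} ρ^{2ℓ} + Σ_{ℓ=1}^{h−1}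 ρ^{2ℓ} − (2h−1)ρ^{2h}, if and only if |ρ| ≤ ρ̄(h). -/
/-!
Each term `r ^ (-2ℓ)` is continuous and strictly decreasing on `(0, ∞)`, the `ℓ = 1` term blows up
at `0+`, and at `r = 1` the sum equals the number `h - 1` of terms; the intermediate value theorem
then gives the cutoff, and strict monotonicity its uniqueness and the threshold characterisation.
For the variance comparison, multiplying `Σ_{ℓ=1}^{h-1} ρ^(-2ℓ)` by `ρ^(2h) > 0` and reflecting
`ℓ ↦ h - ℓ` gives `Σ_{ℓ=1}^{h-1} ρ^(2ℓ)`, so `AsyVar_LA ≤ AsyVar_NA` is the same inequality.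
-/

open Filter Finset Topology

theorem sum_inv_even_pow_mul_pow {K : Type*} [Field K] (n : ℕ) {t : K} (ht : t ≠ 0) :
    (∑ ℓ ∈ Icc 1 n, (t ^ (2 * ℓ))⁻¹) * t ^ (2 * (n + 1)) = ∑ ℓ ∈ Icc 1 n, t ^ (2 * ℓ) := by
  rw [sum_mul]
  refine sum_nbij' (fun ℓ => n + 1 - ℓ) (fun ℓ => n + 1 - ℓ) ?_ ?_ ?_ ?_ ?_
  all_goals intro ℓ hℓ; simp only [mem_Icc] at hℓ
  any_goals simp only [mem_Icc]; omega
  any_goals omega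
  rw [show 2 * (n + 1) = 2 * ℓ + 2 * (n + 1 - ℓ) by omega, pow_add,
    inv_mul_cancel_left₀ (pow_ne_zero _ ht)]

theorem strictAntiOn_sum_inv_even_pow {n : ℕ} (hn : 1 ≤ n) :
    StrictAntiOn (fun r : ℝ => ∑ ℓ ∈ Icc 1 n, (r ^ (2 * ℓ))⁻¹) (Set.Ioi 0) := by
  intro x hx y _ hxy
  refine sum_lt_sum_of_nonempty (nonempty_Icc.mpr hn) fun ℓ hℓ => ?_
  have hℓ : 2 * ℓ ≠ 0 := by simp only [mem_Icc] at hℓ; omega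
  exact inv_strictAnti₀ (pow_pos hx _) (pow_lt_pow_left₀ hxy hx.le hℓ)

theorem continuousAt_sum_inv_even_pow (n : ℕ) {r : ℝ} (hr : r ≠ 0) :
    ContinuousAt (fun r : ℝ => ∑ ℓ ∈ Icc 1 n, (r ^ (2 * ℓ))⁻¹) r := by
  fun_prop (disch := exact pow_ne_zero _ hr)

theorem tendsto_sum_inv_even_pow_nhdsGT_zero {n : ℕ} (hn : 1 ≤ n) :
    Tendsto (fun r : ℝ => ∑ ℓ ∈ Icc 1 n, (r ^ (2 * ℓ))⁻¹) (𝓝[>] 0) atTop := by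
  have hsq : Tendsto (fun r : ℝ => (r ^ 2)⁻¹) (𝓝[>] 0) atTop :=
    tendsto_inv_nhdsGT_zero.comp <| tendsto_nhdsWithin_of_tendsto_nhds_of_eventually_within _
      ((continuous_pow 2).tendsto' 0 0 (zero_pow two_ne_zero) |>.mono_left nhdsWithin_le_nhds)
      (eventually_nhdsWithin_of_forall fun r (hr : 0 < r) => pow_pos hr 2)
  refine tendsto_atTop_mono' _ ?_ hsq
  filter_upwards [self_mem_nhdsWithin] with r (hr : 0 < r)
  exact single_le_sum (f := fun ℓ => (r ^ (2 * ℓ))⁻¹) (fun ℓ _ => by positivity)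
    (mem_Icc.mpr ⟨le_rfl, hn⟩)

theorem exists_mem_Ioo_eq_of_tendsto {f : ℝ → ℝ} {a b L y : ℝ} (hab : a < b)
    (hf : ContinuousOn f (Set.Ioo a b)) (ha : Tendsto f (𝓝[>] a) atTop)
    (hb : Tendsto f (𝓝[<] b) (𝓝 L)) (hL : L < y) : ∃ c ∈ Set.Ioo a b, f c = y := by
  obtain ⟨a', hfa', ha'⟩ := ((ha.eventually_ge_atTop y).and (Ioo_mem_nhdsGT hab)).exists
  obtain ⟨b', hfb', hb'⟩ :=
    ((hb.eventually_lt_const hL).and (Ioo_mem_nhdsLT ha'.2)).exists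
  obtain ⟨c, hc, hfc⟩ := intermediate_value_Icc' hb'.1.le
    (hf.mono (Set.Icc_subset_Ioo ha'.1 hb'.2)) ⟨hfb'.le, hfa'⟩
  exact ⟨c, Set.Icc_subset_Ioo ha'.1 hb'.2 hc, hfc⟩

theorem mul_pow_le_sum_even_pow_iff {K : Type*} [Field K] [LinearOrder K] [IsStrictOrderedRing K]
    (n : ℕ) (y : K) {ρ : K} (hρ : ρ ≠ 0) :
    y * ρ ^ (2 * (n + 1)) ≤ ∑ ℓ ∈ Icc 1 n, ρ ^ (2 * ℓ) ↔ y ≤ ∑ ℓ ∈ Icc 1 n, (ρ ^ (2 * ℓ))⁻¹ := by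
  rw [← sum_inv_even_pow_mul_pow n hρ]
  exact mul_le_mul_iff_of_pos_right ((even_two_mul _).pow_pos hρ)

/-- Existence of the efficiency cutoff between lag-augmented and non-augmented
LP in the stationary homoskedastic AR(1) model: for each `h ≥ 2` the map
`r ↦ Σ_{ℓ=1}^{h−1} r^{−2ℓ}` is strictly decreasing on `(0,1)`, blows up at `0+`,
tends to `h−1 < 2h−1` at `1−`; hence there is a unique `ρ̄(h) ∈ (0,1)` with
`Σ_{ℓ=1}^{h−1} ρ̄(h)^{−2ℓ} = 2h−1`, and for `0 < |ρ| < 1` the lag-augmented LP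
asymptotic variance is at most the non-augmented one iff `|ρ| ≤ ρ̄(h)`. -/
theorem statement18 (h : ℕ) (hh : 2 ≤ h) :
    StrictAntiOn (fun r : ℝ => ∑ ℓ ∈ Finset.Icc 1 (h - 1), (r ^ (2 * ℓ))⁻¹)
      (Set.Ioo 0 1) ∧
    Tendsto (fun r : ℝ => ∑ ℓ ∈ Finset.Icc 1 (h - 1), (r ^ (2 * ℓ))⁻¹)
      (𝓝[>] 0) atTop ∧
    Tendsto (fun r : ℝ => ∑ ℓ ∈ Finset.Icc 1 (h - 1), (r ^ (2 * ℓ))⁻¹)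
      (𝓝[<] 1) (𝓝 ((h : ℝ) - 1)) ∧
    ((h : ℝ) - 1 < 2 * (h : ℝ) - 1) ∧
    ∃ c : ℝ, c ∈ Set.Ioo (0 : ℝ) 1 ∧
      (∑ ℓ ∈ Finset.Icc 1 (h - 1), (c ^ (2 * ℓ))⁻¹) = 2 * (h : ℝ) - 1 ∧
      (∀ c' ∈ Set.Ioo (0 : ℝ) 1,
        (∑ ℓ ∈ Finset.Icc 1 (h - 1), (c' ^ (2 * ℓ))⁻¹) = 2 * (h : ℝ) - 1 → c' = c) ∧
      (∀ ρ : ℝ, 0 < |ρ| → |ρ| < 1 →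
        ((2 * (h : ℝ) - 1 ≤ ∑ ℓ ∈ Finset.Icc 1 (h - 1), (|ρ| ^ (2 * ℓ))⁻¹) ↔ |ρ| ≤ c)) ∧
      (∀ ρ : ℝ, 0 < |ρ| → |ρ| < 1 →
        ((∑ ℓ ∈ Finset.range h, ρ ^ (2 * ℓ))
            ≤ (∑ ℓ ∈ Finset.range h, ρ ^ (2 * ℓ)) +
                (∑ ℓ ∈ Finset.Icc 1 (h - 1), ρ ^ (2 * ℓ)) -
                (2 * (h : ℝ) - 1) * ρ ^ (2 * h) ↔ |ρ| ≤ c)) := by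
  obtain ⟨n, rfl⟩ : ∃ n, h = n + 1 := ⟨h - 1, by omega⟩
  have hn : 1 ≤ n := by omega
  simp only [Nat.add_sub_cancel]
  have hanti := (strictAntiOn_sum_inv_even_pow hn).mono (Set.Ioo_subset_Ioi_self : Set.Ioo (0 : ℝ) 1 ⊆ _)
  have hlim : Tendsto (fun r : ℝ => ∑ ℓ ∈ Icc 1 n, (r ^ (2 * ℓ))⁻¹) (𝓝[<] 1)
      (𝓝 (((n + 1 : ℕ) : ℝ) - 1)) := by
    simpa using (continuousAt_sum_inv_even_pow n one_ne_zero).tendsto.mono_left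
      nhdsWithin_le_nhds
  have hlt : ((n + 1 : ℕ) : ℝ) - 1 < 2 * ((n + 1 : ℕ) : ℝ) - 1 := by push_cast; linarith
  obtain ⟨c, hc, hfc⟩ := exists_mem_Ioo_eq_of_tendsto zero_lt_one
    (continuousOn_of_forall_continuousAt fun r hr => continuousAt_sum_inv_even_pow n hr.1.ne')
    (tendsto_sum_inv_even_pow_nhdsGT_zero hn) hlim hlt
  have hcut : ∀ x ∈ Set.Ioo (0 : ℝ) 1,
      2 * ((n + 1 : ℕ) : ℝ) - 1 ≤ ∑ ℓ ∈ Icc 1 n, (x ^ (2 * ℓ))⁻¹ ↔ x ≤ c :=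
    fun x hx => hfc ▸ hanti.le_iff_ge hc hx
  refine ⟨hanti, tendsto_sum_inv_even_pow_nhdsGT_zero hn, hlim, hlt, c, hc, hfc,
    fun c' hc' hfc' => hanti.injOn hc' hc (hfc'.trans hfc.symm),
    fun ρ h0 h1 => hcut |ρ| ⟨h0, h1⟩, fun ρ h0 h1 => ?_⟩
  rw [le_sub_iff_add_le, add_le_add_iff_left, mul_pow_le_sum_even_pow_iff n _ (abs_pos.mp h0),
    ← hcut |ρ| ⟨h0, h1⟩]
  simp only [pow_abs_two_mul]
end
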